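/- arXiv:math/0508397 — 4 statements merged into one kernel-verified Lean document; each statement's English description precedes it below -/
import Mathlib

section
/- A downward bounded directed locally finite poset P (with minimal element 0, every two elements having a common upper bound, and every interval finite) is strongly confluent (i.e., there is an infinite chain x_1 < x_2 < ... with P equal to the union of the intervals [0, x_i]) if and only if P is countable as a set. -/
open Relation Filter Topology

/-- The set of saturated chains from `x` to `y`: lists whose consecutive entries are
cover relations, starting at `x` and ending at `y`.  A chain of `n + 1` elements
corresponds to an interval of length `n`. -/
def CovChains {P : Type*} [PartialOrder P] (x y : P) : Set (List P) :=
  {l | l.Chain' (· ⋖ ·) ∧ l.head? = some x ∧ l.getLast? = some y}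

/-- `x` has rank `n` over the bottom element `b` : some saturated chain from `b` to `x`
has `n + 1` elements. -/
def HasRankFrom {P : Type*} [PartialOrder P] (b x : P) (n : ℕ) : Prop :=
  ∃ l ∈ CovChains b x, l.length = n + 1

/-- The rank level `X_i`. -/
def levelSet {P : Type*} [PartialOrder P] (b : P) (i : ℕ) : Set P :=
  {x | HasRankFrom b x i}

/-- A poset is strongly confluent if it is the union of the intervals `[⊥, x i]` along
an infinite (strictly increasing) chain `x 1 < x 2 < ...`. -/
def StronglyConfluent (P : Type*) [Preorder P] : Prop :=
  ∃ x : ℕ → P, StrictMono x ∧ ∀ p : P, ∃ i, p ≤ x i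

/-- An (infinite, downward bounded, directed, locally finite) binomial poset with bottom
element `b` and atomic function `A` : graded, with intervals of every length, where the
number of maximal chains in an interval only depends on its length, and every `n`-interval
(`n ≥ 1`) has exactly `A n` atoms. -/
structure IsBinomialPoset (P : Type*) [PartialOrder P] (b : P) (A : ℕ → ℕ) : Prop where
  bot_le : ∀ x : P, b ≤ x
  directed : ∀ x y : P, ∃ z : P, x ≤ z ∧ y ≤ z
  locFin : ∀ x y : P, (Set.Icc x y).Finite
  chain_nonempty : ∀ x y : P, x ≤ y → (CovChains x y).Nonempty
  graded : ∀ x y : P, ∀ l ∈ CovChains x y, ∀ l' ∈ CovChains x y, l.length = l'.length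
  allLengths : ∀ n : ℕ, ∃ x : P, HasRankFrom b x n
  count : ∀ (x y x' y' : P) (n : ℕ), (∃ l ∈ CovChains x y, l.length = n + 1) →
    (∃ l ∈ CovChains x' y', l.length = n + 1) →
    (CovChains x y).ncard = (CovChains x' y').ncard
  atoms : ∀ (x y : P) (n : ℕ), 1 ≤ n → (∃ l ∈ CovChains x y, l.length = n + 1) →
    {z : P | x ⋖ z ∧ z ≤ y}.ncard = A n

/-- The generalised factorial function `B n = A 1 * A 2 * ... * A n`. -/
def Bfun (A : ℕ → ℕ) (n : ℕ) : ℕ := ∏ i ∈ Finset.Icc 1 n, A i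

/-- A bundled poset with a distinguished bottom element. -/
structure BinPoset where
  carrier : Type
  [po : PartialOrder carrier]
  bot : carrier

attribute [instance] BinPoset.po

/-- The atomic sequence `(1, 1, 2, 2, 2, ...)`. -/
def A112 : ℕ → ℕ := fun n => if n ≤ 2 then 1 else 2
/-- An infinite downward bounded directed locally finite poset is strongly
confluent iff it is countable as a set. -/
theorem downward_bounded_directed_locFin_stronglyConfluent_iff_countable
    (P : Type*) [PartialOrder P] [Infinite P] (b : P) (hb : ∀ x : P, b ≤ x)
    (hdir : ∀ x y : P, ∃ z : P, x ≤ z ∧ y ≤ z)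
    (hfin : ∀ x y : P, (Set.Icc x y).Finite) :
    StronglyConfluent P ↔ Countable P := by
  constructor
  · rintro ⟨x, hmono, hcov⟩
    have huniv : (Set.univ : Set P) ⊆ ⋃ i, (Set.Icc b (x i)) := by
      intro p _
      obtain ⟨i, hi⟩ := hcov p
      exact Set.mem_iUnion.2 ⟨i, hb p, hi⟩
    have hcnt : (Set.univ : Set P).Countable :=
      (Set.countable_iUnion (fun i => (hfin b (x i)).countable)).mono huniv
    exact Set.countable_univ_iff.mp hcnt
  · intro hc
    obtain ⟨e, he⟩ := exists_surjective_nat P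
    have key : ∀ z p : P, ∃ z', z < z' ∧ p ≤ z' := by
      intro z p
      obtain ⟨u, hzu, hpu⟩ := hdir z p
      obtain ⟨w, hw⟩ := ((hfin b u).infinite_compl).nonempty
      have hwu : ¬ w ≤ u := fun h => hw ⟨hb w, h⟩
      obtain ⟨v, huv, hwv⟩ := hdir u w
      refine ⟨v, lt_of_le_of_lt hzu (lt_of_le_of_ne huv ?_), le_trans hpu huv⟩
      rintro rfl
      exact hwu hwv
    choose f hf1 hf2 using key
    let x : ℕ → P := fun n => Nat.rec b (fun n z => f z (e n)) n
    refine ⟨x, strictMono_nat_of_lt_succ (fun n => hf1 _ _), fun p => ?_⟩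
    obtain ⟨n, rfl⟩ := he p
    exact ⟨n + 1, hf2 _ _⟩
end

section
/- Let P be a strongly confluent infinite downward bounded binomial poset with atomic function A(n). Then the limit a = lim_{n→∞} A(n) is finite if and only if the rank level X_i = {x ∈ P : rank(x) = i} is finite for some i ∈ ℙ, if and only if all rank levels X_i are finite, if and only if sup_i |X_i| is finite. -/
open Relation Filter Topology

section Aux

variable {P : Type*} [PartialOrder P] {x y z b : P} {l m : List P}

namespace CC

theorem ne_nil (h : l ∈ CovChains x y) : l ≠ [] := by
  rintro rfl; simp [CovChains] at h

theorem len_pos (h : l ∈ CovChains x y) : 0 < l.length :=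
  List.length_pos_iff.2 (ne_nil h)

theorem cons_form (h : l ∈ CovChains x y) : l = x :: l.tail := by
  obtain ⟨-, h2, -⟩ := h
  cases l with
  | nil => simp at h2
  | cons a t => simp_all

theorem concat_form (h : l ∈ CovChains x y) : l = l.dropLast ++ [y] := by
  have hne := ne_nil h
  obtain ⟨-, -, h3⟩ := h
  conv_lhs => rw [← List.dropLast_append_getLast hne]
  rw [List.getLast?_eq_getLast hne] at h3
  simp_all

theorem pairwise_lt (h : l ∈ CovChains x y) : l.Pairwise (· < ·) := by
  have := h.1
  have h2 : l.Chain' (· < ·) := List.IsChain.imp (fun a b hab => hab.lt) this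
  exact List.isChain_iff_pairwise.1 h2

theorem nodup (h : l ∈ CovChains x y) : l.Nodup :=
  (pairwise_lt h).imp ne_of_lt

theorem le_of_mem (h : l ∈ CovChains x y) (hz : z ∈ l) : x ≤ z ∧ z ≤ y := by
  constructor
  · rw [cons_form h] at hz
    rcases List.mem_cons.1 hz with rfl | hz'
    · exact le_refl _
    · exact ((List.pairwise_cons.1 ((cons_form h) ▸ pairwise_lt h)).1 _ hz').le
  · rw [concat_form h] at hz
    rcases List.mem_append.1 hz with hz' | hz'
    · have hp : (l.dropLast ++ [y]).Pairwise (· < ·) := (concat_form h) ▸ pairwise_lt h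
      exact (List.pairwise_append.1 hp).2.2 _ hz' _ (List.mem_singleton_self y) |>.le
    · simp_all

theorem le (h : l ∈ CovChains x y) : x ≤ y :=
  (le_of_mem h (by rw [cons_form h]; exact List.mem_cons_self)).2

theorem singleton (h : l ∈ CovChains x y) (hl : l.length = 1) : x = y := by
  cases l with
  | nil => simp at hl
  | cons a t =>
    have := h.2.1; have := h.2.2
    cases t with
    | nil => simp_all
    | cons c d => simp at hl

theorem append (h : l ∈ CovChains x y) (hyz : y ⋖ z) : l ++ [z] ∈ CovChains x z := by
  obtain ⟨h1, h2, h3⟩ := h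
  refine ⟨?_, ?_, ?_⟩
  · unfold List.Chain'; rw [List.isChain_append]
    refine ⟨h1, List.isChain_singleton _, ?_⟩
    intro a ha c hc
    rw [h3] at ha; rw [List.head?_cons] at hc
    obtain rfl := Option.some_injective _ ha
    obtain rfl := Option.some_injective _ hc
    exact hyz
  · rw [List.head?_append_of_ne_nil _ (ne_nil ⟨h1, h2, h3⟩)]; exact h2
  · simp

theorem cons (hxz : x ⋖ z) (h : m ∈ CovChains z y) : x :: m ∈ CovChains x y := by
  obtain ⟨h1, h2, h3⟩ := h
  refine ⟨?_, rfl, ?_⟩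
  · unfold List.Chain'; rw [List.isChain_cons]
    refine ⟨?_, h1⟩
    intro c hc; rw [h2] at hc; obtain rfl := Option.some_injective _ hc; exact hxz
  · cases m with
    | nil => simp at h2
    | cons a t => rw [List.getLast?_cons_cons]; exact h3

theorem tail_mem (h : l ∈ CovChains x y) (hl : 2 ≤ l.length) :
    ∃ z, x ⋖ z ∧ l.tail ∈ CovChains z y := by
  obtain ⟨a, t, rfl⟩ : ∃ a t, l = a :: t := ⟨_, _, cons_form h⟩
  obtain ⟨c, u, rfl⟩ : ∃ c u, t = c :: u := by
    cases t with
    | nil => simp at hl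
    | cons c u => exact ⟨c, u, rfl⟩
  have hx : a = x := by have := h.2.1; simp_all
  subst hx
  refine ⟨c, (List.isChain_cons_cons.1 h.1).1, (List.isChain_cons_cons.1 h.1).2, rfl, ?_⟩
  have := h.2.2; rwa [List.getLast?_cons_cons] at this

theorem dropLast_mem (h : l ∈ CovChains x y) (hl : 2 ≤ l.length) :
    ∃ z, z ⋖ y ∧ l.dropLast ∈ CovChains x z := by
  have hcf := concat_form h
  have hdne : l.dropLast ≠ [] := by
    intro he; rw [he] at hcf; rw [hcf] at hl; simp at hl
  refine ⟨l.dropLast.getLast hdne, ?_, ?_, ?_, List.getLast?_eq_getLast hdne⟩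
  · have h1 : (l.dropLast ++ [y]).Chain' (· ⋖ ·) := hcf ▸ h.1
    unfold List.Chain' at h1; rw [List.isChain_append] at h1
    exact h1.2.2 _ (List.getLast?_eq_getLast hdne) _ rfl
  · have h1 : (l.dropLast ++ [y]).Chain' (· ⋖ ·) := hcf ▸ h.1
    unfold List.Chain' at h1; rw [List.isChain_append] at h1; exact h1.1
  · have h2 := h.2.1
    rw [hcf, List.head?_append_of_ne_nil _ hdne] at h2; exact h2

theorem take_mem (h : l ∈ CovChains x y) {n : ℕ} (hn : n < l.length) :
    l.take (n+1) ∈ CovChains x (l.get ⟨n, hn⟩) := by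
  refine ⟨h.1.take _, ?_, ?_⟩
  · rw [← List.take_append_drop (n+1) l] at h
    have hne : l.take (n+1) ≠ [] := by
      intro he
      have : (l.take (n+1)).length = 0 := by rw [he]; rfl
      rw [List.length_take] at this; omega
    have h2 := h.2.1
    rwa [List.head?_append_of_ne_nil _ hne] at h2
  · rw [List.take_succ]
    have h1 : l[n]? = some (l.get ⟨n, hn⟩) := by
      rw [List.getElem?_eq_getElem hn]; rfl
    rw [h1, Option.toList_some, List.getLast?_concat]

theorem finite (hfin : (Set.Icc x y).Finite) : (CovChains x y).Finite := by
  letI := Classical.decEq P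
  have hinj : Set.InjOn (fun l : List P => l.toFinset) (CovChains x y) := by
    intro l1 h1 l2 h2 he
    refine List.Perm.eq_of_pairwise (fun a b _ _ h1 h2 => (lt_asymm h1 h2).elim) (pairwise_lt h1) (pairwise_lt h2) ?_
    exact (List.perm_of_nodup_nodup_toFinset_eq (nodup h1) (nodup h2) he)
  have himg : (fun l : List P => l.toFinset) '' (CovChains x y) ⊆ ↑(hfin.toFinset.powerset) := by
    rintro s ⟨l, hl, rfl⟩
    simp only [Finset.coe_powerset, Set.mem_preimage, Set.mem_powerset_iff, Finset.coe_subset,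
      Finset.subset_iff]
    intro a ha
    rw [List.mem_toFinset] at ha
    have := le_of_mem hl ha
    simp [Set.Finite.mem_toFinset, Set.mem_Icc, this]
  exact Set.Finite.of_finite_image ((hfin.toFinset.powerset : Finset (Finset P)).finite_toSet.subset himg) hinj

theorem trans_mem (h1 : l ∈ CovChains x y) (h2 : m ∈ CovChains y z) :
    l ++ m.tail ∈ CovChains x z ∧ (l ++ m.tail).length + 1 = l.length + m.length := by
  have hm := cons_form h2
  cases htl : m.tail with
  | nil =>
    rw [htl] at hm
    obtain rfl : y = z := singleton h2 (by rw [hm]; rfl)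
    constructor
    · simpa using h1
    · rw [hm]; simp
  | cons c u =>
    constructor
    · refine ⟨?_, ?_, ?_⟩
      · unfold List.Chain'; rw [List.isChain_append]
        refine ⟨h1.1, ?_, ?_⟩
        · rw [← htl]; exact List.IsChain.tail h2.1
        · intro a ha d hd
          rw [h1.2.2] at ha
          obtain rfl := Option.some_injective _ ha
          rw [List.head?_cons] at hd
          obtain rfl := Option.some_injective _ hd
          have := h2.1
          unfold List.Chain' at this; rw [hm, htl, List.isChain_cons_cons] at this
          exact this.1
      · rw [List.head?_append_of_ne_nil _ (ne_nil h1)]; exact h1.2.1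
      · rw [List.getLast?_append_cons]
        have h3 := h2.2.2
        rw [hm, htl, List.getLast?_cons_cons] at h3
        exact h3
    · rw [List.length_append, ← htl, List.length_tail]
      have := len_pos h2
      omega

theorem pair_mem (hxz : x ⋖ z) : [x, z] ∈ CovChains x z := by
  refine ⟨?_, rfl, rfl⟩
  simp [List.Chain', List.isChain_cons_cons, hxz]

end CC




namespace BP

variable {A : ℕ → ℕ} {n i j k : ℕ} (hP : IsBinomialPoset P b A)
include hP

theorem rank_unique {n m : ℕ} (h1 : HasRankFrom b x n) (h2 : HasRankFrom b x m) : n = m := by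
  obtain ⟨l, hl, hl2⟩ := h1; obtain ⟨l', hl', hl2'⟩ := h2
  have := hP.graded b x l hl l' hl'; omega

theorem rank_exists (x : P) : ∃ n, HasRankFrom b x n := by
  obtain ⟨l, hl⟩ := hP.chain_nonempty b x (hP.bot_le x)
  exact ⟨l.length - 1, l, hl, by have := CC.len_pos hl; omega⟩

omit hP in
theorem rank_add (hx : HasRankFrom b x i) (h : l ∈ CovChains x y) (hl : l.length = j + 1) :
    HasRankFrom b y (i + j) := by
  obtain ⟨m, hm, hm2⟩ := hx
  have := CC.trans_mem hm h
  exact ⟨m ++ l.tail, this.1, by omega⟩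

omit hP in
theorem rank_cover (hx : HasRankFrom b x i) (hc : x ⋖ y) : HasRankFrom b y (i + 1) :=
  rank_add hx (CC.pair_mem hc) rfl

theorem rank_drop (hy : HasRankFrom b y (k + 1)) (hc : z ⋖ y) : HasRankFrom b z k := by
  obtain ⟨i, hi⟩ := rank_exists hP z
  have h2 := rank_cover hi hc
  have := rank_unique hP h2 hy
  obtain rfl : i = k := by omega
  exact hi

theorem exists_interval (x : P) (n : ℕ) :
    ∃ y l, l ∈ CovChains x y ∧ l.length = n + 1 := by
  obtain ⟨i, hi⟩ := rank_exists hP x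
  obtain ⟨w, hw⟩ := hP.allLengths (i + n)
  obtain ⟨z, hxz, hwz⟩ := hP.directed x w
  obtain ⟨m, hm⟩ := hP.chain_nonempty w z hwz
  have hmz : HasRankFrom b z (i + n + (m.length - 1)) := by
    refine rank_add hw hm ?_
    have := CC.len_pos hm; omega
  obtain ⟨l, hl⟩ := hP.chain_nonempty x z hxz
  have hlz : HasRankFrom b z (i + (l.length - 1)) := by
    refine rank_add hi hl ?_
    have := CC.len_pos hl; omega
  have heq := rank_unique hP hmz hlz
  have hlp := CC.len_pos hl
  have hmp := CC.len_pos hm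
  have hn : n < l.length := by omega
  refine ⟨l.get ⟨n, hn⟩, l.take (n + 1), CC.take_mem hl hn, ?_⟩
  rw [List.length_take]; omega

theorem A_pos (hn : 1 ≤ n) : 1 ≤ A n := by
  obtain ⟨y, l, hl, hlen⟩ := exists_interval hP b n
  rw [← hP.atoms b y n hn ⟨l, hl, hlen⟩]
  have hfin : {z : P | b ⋖ z ∧ z ≤ y}.Finite :=
    (hP.locFin b y).subset (fun z hz => ⟨hz.1.le, hz.2⟩)
  rw [Nat.succ_le_iff, Set.ncard_pos hfin]
  obtain ⟨z, hz1, hz2⟩ := CC.tail_mem hl (by omega)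
  exact ⟨z, hz1, CC.le hz2⟩

theorem A_mono {m : ℕ} (hm : 1 ≤ m) (hmn : m ≤ n) : A m ≤ A n := by
  obtain ⟨y, l, hl, hlen⟩ := exists_interval hP b n
  have hmlt : m < l.length := by omega
  set y' := l.get ⟨m, hmlt⟩ with hy'
  have htake := CC.take_mem hl hmlt
  have hlen' : (l.take (m+1)).length = m + 1 := by rw [List.length_take]; omega
  rw [← hP.atoms b y' m hm ⟨_, htake, hlen'⟩, ← hP.atoms b y n (le_trans hm hmn) ⟨l, hl, hlen⟩]
  refine Set.ncard_le_ncard ?_ ((hP.locFin b y).subset (fun z hz => ⟨hz.1.le, hz.2⟩))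
  intro z hz
  refine ⟨hz.1, hz.2.trans ?_⟩
  exact (CC.le_of_mem hl (List.get_mem l ⟨m, hmlt⟩)).2

theorem covers_bounded {C : ℕ} (hC : ∀ n, 1 ≤ n → A n ≤ C) (x : P) :
    {z | x ⋖ z}.Finite ∧ {z | x ⋖ z}.ncard ≤ C := by
  haveI : IsDirected P (· ≤ ·) := ⟨hP.directed⟩
  haveI : Nonempty P := ⟨b⟩
  have key : ∀ s : Finset P, ↑s ⊆ {z | x ⋖ z} → s.card ≤ C := by
    intro s hs
    rcases s.eq_empty_or_nonempty with rfl | ⟨z0, hz0⟩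
    · simp
    · classical
      obtain ⟨w, hw⟩ := Finset.exists_le (insert x s)
      have hxw : x ≤ w := hw x (Finset.mem_insert_self _ _)
      have hxltw : x < w :=
        lt_of_lt_of_le (hs hz0).lt (hw z0 (Finset.mem_insert_of_mem hz0))
      obtain ⟨l, hl⟩ := hP.chain_nonempty x w hxw
      have hlen2 : 2 ≤ l.length := by
        have h1 := CC.len_pos hl
        by_contra h
        have : l.length = 1 := by omega
        exact absurd (CC.singleton hl this) (ne_of_lt hxltw)
      have hA := hP.atoms x w (l.length - 1) (by omega) ⟨l, hl, by omega⟩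
      calc s.card = (↑s : Set P).ncard := (Set.ncard_coe_finset s).symm
        _ ≤ {z : P | x ⋖ z ∧ z ≤ w}.ncard := by
            refine Set.ncard_le_ncard ?_ ((hP.locFin x w).subset (fun z hz => ⟨hz.1.le, hz.2⟩))
            intro z hz
            exact ⟨hs hz, hw z (Finset.mem_insert_of_mem hz)⟩
        _ = A (l.length - 1) := hA
        _ ≤ C := hC _ (by omega)
  have hfin : {z | x ⋖ z}.Finite := by
    by_contra h
    have hinf : {z | x ⋖ z}.Infinite := h
    obtain ⟨t, ht, htc⟩ := hinf.exists_subset_card_eq (C + 1)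
    have := key t ht
    omega
  refine ⟨hfin, ?_⟩
  rw [Set.ncard_eq_toFinset_card _ hfin]
  exact key _ (by simp)

end BP

namespace BP
variable {A : ℕ → ℕ} {n i j k : ℕ} (hP : IsBinomialPoset P b A)
include hP

theorem downcovers_card (hy : HasRankFrom b y (k + 1)) :
    {z | z ⋖ y}.ncard = A (k + 1) := by
  classical
  obtain ⟨w, hw⟩ := hP.allLengths k
  set c := (CovChains b w).ncard with hcdef
  have hwfin := CC.finite (hP.locFin b w)
  have hc1 : 1 ≤ c := by
    rw [hcdef, Nat.succ_le_iff, Set.ncard_pos hwfin]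
    exact hP.chain_nonempty b w (hP.bot_le w)
  obtain ⟨l0, hl0, hl0len⟩ := id hy
  have hlen : ∀ l ∈ CovChains b y, l.length = k + 2 := fun l hl => by
    have := hP.graded b y l hl l0 hl0; omega
  have hSfin := CC.finite (hP.locFin b y)
  have hcoatfin : {z | z ⋖ y}.Finite :=
    (hP.locFin b y).subset (fun z hz => ⟨hP.bot_le z, hz.le⟩)
  have hatfin : {z : P | b ⋖ z ∧ z ≤ y}.Finite :=
    (hP.locFin b y).subset (fun z hz => ⟨hz.1.le, hz.2⟩)
  -- the generic fiber counting
  have fiber_eq : ∀ (z : P), (∃ l ∈ CovChains b z, l.length = k + 1) →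
      (CovChains b z).ncard = c := fun z hz => hP.count b z b w k hz hw
  have fiber_eq' : ∀ z : P, b ⋖ z → z ≤ y → (CovChains z y).ncard = c := by
    intro z hbz hzy
    obtain ⟨m, hm⟩ := hP.chain_nonempty z y hzy
    have hc := CC.cons hbz hm
    have := hlen _ hc
    refine hP.count z y b w k ⟨m, hm, ?_⟩ hw
    simp only [List.length_cons] at this
    omega
  have claim1 : hSfin.toFinset.card = hcoatfin.toFinset.card * c := by
    have H : ∀ l ∈ hSfin.toFinset, (l.dropLast.getLast?).getD b ∈ hcoatfin.toFinset := by
      intro l hl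
      rw [Set.Finite.mem_toFinset] at hl ⊢
      obtain ⟨z, hzy, hdz⟩ := CC.dropLast_mem hl (by rw [hlen l hl]; omega)
      rw [hdz.2.2, Option.getD_some]
      exact hzy
    rw [Finset.card_eq_sum_card_fiberwise H]
    rw [Finset.sum_congr rfl (g := fun _ => c) ?_, Finset.sum_const, smul_eq_mul]
    intro z hz
    rw [Set.Finite.mem_toFinset] at hz
    have hrz : HasRankFrom b z k := rank_drop hP hy hz
    rw [← fiber_eq z hrz, Set.ncard_eq_toFinset_card _ (CC.finite (hP.locFin b z))]
    refine Finset.card_bij (fun l _ => l.dropLast) ?_ ?_ ?_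
    · intro l hl
      rw [Finset.mem_filter, Set.Finite.mem_toFinset] at hl
      obtain ⟨hl1, hl2⟩ := hl
      obtain ⟨z', hz'y, hdz'⟩ := CC.dropLast_mem hl1 (by rw [hlen l hl1]; omega)
      rw [hdz'.2.2, Option.getD_some] at hl2
      subst hl2
      rw [Set.Finite.mem_toFinset]
      exact hdz'
    · intro l1 hl1 l2 hl2 he
      rw [Finset.mem_filter, Set.Finite.mem_toFinset] at hl1 hl2
      rw [CC.concat_form hl1.1, CC.concat_form hl2.1, show l1.dropLast = l2.dropLast from he]
    · intro m hm
      rw [Set.Finite.mem_toFinset] at hm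
      have hap := CC.append hm hz
      refine ⟨m ++ [y], ?_, by simp⟩
      rw [Finset.mem_filter, Set.Finite.mem_toFinset]
      refine ⟨hap, ?_⟩
      rw [List.dropLast_concat, hm.2.2, Option.getD_some]
  have claim2 : hSfin.toFinset.card = hatfin.toFinset.card * c := by
    have H : ∀ l ∈ hSfin.toFinset, (l.tail.head?).getD b ∈ hatfin.toFinset := by
      intro l hl
      rw [Set.Finite.mem_toFinset] at hl ⊢
      obtain ⟨z, hbz, htz⟩ := CC.tail_mem hl (by rw [hlen l hl]; omega)
      rw [htz.2.1, Option.getD_some]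
      exact ⟨hbz, CC.le htz⟩
    rw [Finset.card_eq_sum_card_fiberwise H]
    rw [Finset.sum_congr rfl (g := fun _ => c) ?_, Finset.sum_const, smul_eq_mul]
    intro z hz
    rw [Set.Finite.mem_toFinset] at hz
    rw [← fiber_eq' z hz.1 hz.2, Set.ncard_eq_toFinset_card _ (CC.finite (hP.locFin z y))]
    refine Finset.card_bij (fun l _ => l.tail) ?_ ?_ ?_
    · intro l hl
      rw [Finset.mem_filter, Set.Finite.mem_toFinset] at hl
      obtain ⟨hl1, hl2⟩ := hl
      obtain ⟨z', hbz', htz'⟩ := CC.tail_mem hl1 (by rw [hlen l hl1]; omega)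
      rw [htz'.2.1, Option.getD_some] at hl2
      subst hl2
      rw [Set.Finite.mem_toFinset]
      exact htz'
    · intro l1 hl1 l2 hl2 he
      rw [Finset.mem_filter, Set.Finite.mem_toFinset] at hl1 hl2
      have e1 := CC.cons_form hl1.1
      have e2 := CC.cons_form hl2.1
      rw [e1, e2, show l1.tail = l2.tail from he]
    · intro m hm
      rw [Set.Finite.mem_toFinset] at hm
      have hap := CC.cons hz.1 hm
      refine ⟨b :: m, ?_, rfl⟩
      rw [Finset.mem_filter, Set.Finite.mem_toFinset]
      refine ⟨hap, ?_⟩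
      rw [List.tail_cons, hm.2.1, Option.getD_some]
  have hA := hP.atoms b y (k + 1) (by omega) ⟨l0, hl0, by omega⟩
  have hta : hatfin.toFinset.card = A (k + 1) := by
    rw [← hA, Set.ncard_eq_toFinset_card _ hatfin]
  have htc : hcoatfin.toFinset.card = hatfin.toFinset.card :=
    Nat.eq_of_mul_eq_mul_right hc1 (claim1 ▸ claim2)
  rw [Set.ncard_eq_toFinset_card _ hcoatfin, htc, hta]

end BP

namespace BP
variable {A : ℕ → ℕ} {n i j k : ℕ} {C a : ℕ} (hP : IsBinomialPoset P b A)
include hP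

omit hP in
theorem level_zero : levelSet b 0 ⊆ {b} := by
  intro x hx
  obtain ⟨l, hl, hlen⟩ := hx
  exact (CC.singleton hl hlen).symm ▸ rfl

theorem level_finite (hC : ∀ n, 1 ≤ n → A n ≤ C) : ∀ i, (levelSet b i).Finite := by
  intro i
  induction i with
  | zero => exact (Set.finite_singleton b).subset level_zero
  | succ i ih =>
    have hsub : levelSet b (i+1) ⊆ ⋃ x ∈ levelSet b i, {z | x ⋖ z} := by
      intro y hy
      obtain ⟨l, hl, hlen⟩ := hy
      obtain ⟨z, hzy, hdz⟩ := CC.dropLast_mem hl (by omega)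
      have hdlen : l.dropLast.length = i + 1 := by
        rw [List.length_dropLast]; omega
      exact Set.mem_biUnion ⟨l.dropLast, hdz, hdlen⟩ hzy
    exact (ih.biUnion (fun x _ => (covers_bounded hP hC x).1)).subset hsub

theorem level_card_le (hC : ∀ n, 1 ≤ n → A n ≤ a) (hAa : A (n + 1) = a) :
    (levelSet b (n + 1)).ncard ≤ (levelSet b n).ncard := by
  classical
  have hf1 := level_finite hP hC (n + 1)
  have hf0 := level_finite hP hC n
  have ha1 : 1 ≤ a := hAa ▸ A_pos hP (by omega)
  rw [Set.ncard_eq_toFinset_card _ hf1, Set.ncard_eq_toFinset_card _ hf0]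
  refine Nat.le_of_mul_le_mul_right ?_ (show 0 < a by omega)
  refine Finset.card_mul_le_card_mul (fun y x => x ⋖ y) ?_ ?_
  · intro y hy
    rw [Set.Finite.mem_toFinset] at hy
    have hdc := downcovers_card hP hy
    calc a = {z | z ⋖ y}.ncard := by rw [hdc, hAa]
      _ ≤ ((hf0.toFinset.bipartiteAbove (fun y x => x ⋖ y) y) : Set P).ncard := by
          refine Set.ncard_le_ncard ?_ (Finset.finite_toSet _)
          intro z hz
          simp only [Finset.mem_coe, Finset.mem_bipartiteAbove, Set.Finite.mem_toFinset]
          exact ⟨rank_drop hP hy hz, hz⟩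
      _ = _ := Set.ncard_coe_finset _
  · intro x hx
    have hcov := covers_bounded hP hC x
    calc ((hf1.toFinset.bipartiteBelow (fun y x => x ⋖ y) x)).card
        = ((hf1.toFinset.bipartiteBelow (fun y x => x ⋖ y) x) : Set P).ncard :=
          (Set.ncard_coe_finset _).symm
      _ ≤ {z | x ⋖ z}.ncard := by
          refine Set.ncard_le_ncard ?_ hcov.1
          intro z hz
          simp only [Finset.mem_coe, Finset.mem_bipartiteBelow] at hz
          exact hz.2
      _ ≤ a := hcov.2

end BP



end Aux

/-- For a strongly confluent infinite downward bounded binomial poset with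
atomic function `A`, the following are equivalent: the limit of `A` is finite (i.e. `A`
is bounded); some rank level `X_i` (`i ≥ 1`) is finite; all rank levels are finite; the
supremum of the cardinalities of the rank levels is finite. -/
theorem binomialPoset_bounded_atomic_tfae
    (P : Type*) [PartialOrder P] [Infinite P] (b : P) (A : ℕ → ℕ)
    (hP : IsBinomialPoset P b A) (hconf : StronglyConfluent P) :
    [ (∃ C : ℕ, ∀ n : ℕ, A n ≤ C),
      (∃ i : ℕ, 1 ≤ i ∧ (levelSet b i).Finite),
      (∀ i : ℕ, (levelSet b i).Finite),
      (∃ C : ℕ, ∀ i : ℕ, (levelSet b i).encard ≤ (C : ℕ∞)) ].TFAE := by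
  tfae_have 4 → 3 := by
    rintro ⟨C, hC⟩ i
    rw [← Set.encard_lt_top_iff]
    exact lt_of_le_of_lt (hC i) (WithTop.coe_lt_top C)
  tfae_have 3 → 2 := fun h => ⟨1, le_refl 1, h 1⟩
  tfae_have 2 → 1 := by
    rintro ⟨i, hi1, hfin⟩
    refine ⟨max (A 0) ((levelSet b i).ncard), fun n => ?_⟩
    match n with
    | 0 => exact le_max_left _ _
    | (m + 1) =>
      refine le_trans ?_ (le_max_right _ _)
      obtain ⟨x, hx⟩ := hP.allLengths (i - 1)
      obtain ⟨y, l, hl, hlen⟩ := BP.exists_interval hP x (m + 1)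
      rw [← hP.atoms x y (m + 1) (by omega) ⟨l, hl, hlen⟩]
      refine Set.ncard_le_ncard ?_ hfin
      intro z hz
      have := BP.rank_cover hx hz.1
      have heq : i - 1 + 1 = i := by omega
      rwa [heq] at this
  tfae_have 1 → 4 := by
    rintro ⟨C, hC⟩
    set S := Set.range (fun m => A (m + 1)) with hS
    have hbdd : BddAbove S := ⟨C, by rintro _ ⟨m, rfl⟩; exact hC _⟩
    obtain ⟨N, hN⟩ := Nat.sSup_mem (⟨A 1, 0, rfl⟩ : S.Nonempty) hbdd
    set a := sSup S with ha
    have hCa : ∀ n, 1 ≤ n → A n ≤ a := fun n hn =>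
      le_csSup hbdd ⟨n - 1, by simp only []; congr 1; omega⟩
    have hstab : ∀ m, N ≤ m → A (m + 1) = a := fun m hm =>
      le_antisymm (hCa _ (by omega)) (hN ▸ BP.A_mono hP (by omega) (by omega))
    have hfin := BP.level_finite hP hCa
    have hdec : ∀ m, N ≤ m → (levelSet b (m + 1)).ncard ≤ (levelSet b m).ncard :=
      fun m hm => BP.level_card_le hP hCa (hstab m hm)
    have hle : ∀ j, (levelSet b (N + j)).ncard ≤ (levelSet b N).ncard := by
      intro j
      induction j with
      | zero => exact le_refl _
      | succ j ih => exact le_trans (hdec (N + j) (by omega)) ih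
    set D := Finset.sup (Finset.range (N + 1)) (fun i => (levelSet b i).ncard) with hD
    refine ⟨D, fun i => ?_⟩
    have hi : (levelSet b i).ncard ≤ D := by
      rcases le_or_gt i N with h | h
      · exact Finset.le_sup (f := fun i => (levelSet b i).ncard) (Finset.mem_range.2 (Nat.lt_succ_of_le h))
      · have heq : i = N + (i - N) := by omega
        rw [heq]
        exact (hle _).trans (Finset.le_sup (f := fun i => (levelSet b i).ncard) (Finset.mem_range.2 N.lt_succ_self))
    calc (levelSet b i).encard = ((levelSet b i).ncard : ℕ∞) := by
          rw [(hfin i).encard_eq_coe_toFinset_card, Set.ncard_eq_toFinset_card _ (hfin i)]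
      _ ≤ (D : ℕ∞) := by exact_mod_cast hi
  tfae_finish
end

section
/- Let P be a strongly confluent infinite downward bounded binomial poset whose atomic sequence A(n) has finite limit a. Then for every i, the number of elements of rank i equals a^i / B(i), where B(i) = A(1)···A(i); moreover sup_i |X_i| = lim_{i→∞} |X_i| = ∏_{i=1}^∞ (a / A(i)), the poset P is countable, and every element of P is covered by exactly a elements. -/
open Relation Filter Topology

section Aux
variable {P : Type*} [PartialOrder P] {x y z b q : P} {l m t : List P}

lemma cc_ne_nil (hl : l ∈ CovChains x y) : l ≠ [] := by
  rintro rfl; exact absurd hl.2.1 (by simp)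

lemma cc_pairwise (hl : l ∈ CovChains x y) : l.Pairwise (· < ·) :=
  List.isChain_iff_pairwise.mp (hl.1.imp fun _ _ h => h.lt)

lemma cc_nodup (hl : l ∈ CovChains x y) : l.Nodup :=
  (cc_pairwise hl).imp fun h => ne_of_lt h

lemma cc_exists_cons (hl : l ∈ CovChains x y) : ∃ t, l = x :: t := by
  cases l with
  | nil => exact absurd rfl (cc_ne_nil hl)
  | cons u t =>
    have hu : u = x := by simpa using hl.2.1
    exact ⟨t, by rw [hu]⟩

lemma cc_le_of_mem (hl : l ∈ CovChains x y) : ∀ p ∈ l, x ≤ p ∧ p ≤ y := by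
  intro p hp
  obtain ⟨t, rfl⟩ := cc_exists_cons hl
  constructor
  · rcases List.mem_cons.mp hp with rfl | hp
    · exact le_rfl
    · exact (List.rel_of_pairwise_cons (cc_pairwise hl) hp).le
  · have hrev : (x :: t).reverse.Pairwise (· > ·) :=
      List.pairwise_reverse.mpr (cc_pairwise hl)
    have hy : (x :: t).reverse.head? = some y := by
      rw [List.head?_reverse]; exact hl.2.2
    obtain ⟨r, hr⟩ : ∃ r, (x :: t).reverse = y :: r := by
      cases h : (x :: t).reverse with
      | nil => rw [h] at hy; exact absurd hy (by simp)
      | cons u r =>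
        rw [h] at hy
        have hu : u = y := by simpa using hy
        exact ⟨r, by rw [← hu]⟩
    have hp' : p ∈ (x :: t).reverse := List.mem_reverse.mpr hp
    rw [hr] at hp' hrev
    rcases List.mem_cons.mp hp' with rfl | hp'
    · exact le_rfl
    · exact (List.rel_of_pairwise_cons hrev hp').le

lemma cc_le (hl : l ∈ CovChains x y) : x ≤ y := by
  obtain ⟨t, rfl⟩ := cc_exists_cons hl
  exact (cc_le_of_mem hl x List.mem_cons_self).2

lemma singleton_mem_cc (x : P) : [x] ∈ CovChains x x :=
  ⟨List.isChain_singleton x, rfl, rfl⟩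

lemma cc_self (hl : l ∈ CovChains x x) : l = [x] := by
  obtain ⟨t, rfl⟩ := cc_exists_cons hl
  cases t with
  | nil => rfl
  | cons u t' =>
    have hu : u ∈ x :: u :: t' := List.mem_cons_of_mem _ List.mem_cons_self
    have h1 : x < u := List.rel_of_pairwise_cons (cc_pairwise hl) List.mem_cons_self
    exact absurd ((cc_le_of_mem hl u hu).2) h1.not_ge

lemma cc_cons (hxz : x ⋖ z) (hm : m ∈ CovChains z y) : x :: m ∈ CovChains x y := by
  refine ⟨List.isChain_cons.mpr ⟨fun u hu => ?_, hm.1⟩, rfl, ?_⟩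
  · rw [hm.2.1] at hu; exact (Option.some_inj.mp hu) ▸ hxz
  · show (([x] ++ m)).getLast? = some y
    rw [List.getLast?_append, hm.2.2]; rfl

lemma cc_append_single (hl : l ∈ CovChains b z) (hzq : z ⋖ q) :
    l ++ [q] ∈ CovChains b q := by
  refine ⟨List.isChain_append.mpr ⟨hl.1, List.isChain_singleton q, fun u hu v hv => ?_⟩, ?_, List.getLast?_concat⟩
  · rw [hl.2.2] at hu
    cases Option.some_inj.mp hu
    cases Option.some_inj.mp hv
    exact hzq
  · rw [List.head?_append, hl.2.1]; rfl

lemma cc_concat (hl : l ∈ CovChains x z) (hm : m ∈ CovChains z y) :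
    l ++ m.tail ∈ CovChains x y ∧ (l ++ m.tail).length + 1 = l.length + m.length := by
  obtain ⟨t, rfl⟩ := cc_exists_cons hm
  refine ⟨⟨List.isChain_append.mpr ⟨hl.1, hm.1.tail, fun u hu v hv => ?_⟩, ?_, ?_⟩, by
    simp [List.length_append]; ring⟩
  · rw [hl.2.2] at hu
    cases Option.some_inj.mp hu
    have := List.isChain_cons.mp hm.1
    exact this.1 v hv
  · rw [List.head?_append, hl.2.1]; rfl
  · show (l ++ (z :: t).tail).getLast? = some y
    cases t with
    | nil => rw [List.getLast?_append]; simpa using (hm.2.2 ▸ hl.2.2)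
    | cons u t' =>
      have h2' : (u :: t').getLast? = some y :=
        (List.getLast?_cons_cons (a := z)).symm.trans hm.2.2
      rw [List.getLast?_append, show (z :: u :: t').tail = u :: t' from rfl, h2']
      rfl

lemma cc_decompose_cons (hl : l ∈ CovChains x y) (h2 : 2 ≤ l.length) :
    ∃ z t, l = x :: t ∧ x ⋖ z ∧ t ∈ CovChains z y := by
  obtain ⟨t, rfl⟩ := cc_exists_cons hl
  cases t with
  | nil => simp at h2
  | cons z t' =>
    have hc := List.isChain_cons.mp hl.1
    exact ⟨z, z :: t', rfl, hc.1 z rfl, hc.2, rfl,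
      (List.getLast?_cons_cons (a := x)).symm.trans hl.2.2⟩

lemma cc_decompose_last (hl : l ∈ CovChains x y) (h2 : 2 ≤ l.length) :
    ∃ z m, l = m ++ [y] ∧ m ∈ CovChains x z ∧ z ⋖ y := by
  have hm : l.dropLast ++ [y] = l := List.dropLast_append_getLast? y hl.2.2
  have hne : l.dropLast ≠ [] := by
    intro h
    rw [h] at hm
    rw [← hm] at h2; simp at h2
  obtain ⟨z, hz⟩ : ∃ z, l.dropLast.getLast? = some z :=
    ⟨l.dropLast.getLast hne, List.getLast?_eq_getLast hne⟩
  have hchain := List.isChain_append.mp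
    (show (l.dropLast ++ [y]).Chain' (· ⋖ ·) by rw [hm]; exact hl.1)
  refine ⟨z, l.dropLast, hm.symm, ⟨hchain.1, ?_, hz⟩, hchain.2.2 z hz y rfl⟩
  have := hl.2.1
  rw [← hm, List.head?_append] at this
  cases h : l.dropLast.head? with
  | none => exact absurd h (by simp [hne])
  | some u => rw [h] at this; simpa using this

end Aux



section Rank
variable {P : Type*} [PartialOrder P] {b x y z q p : P} {A : ℕ → ℕ} {n i : ℕ} {l m : List P}
variable (hP : IsBinomialPoset P b A)

include hP

lemma cc_finite (x y : P) : (CovChains x y).Finite := by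
  classical
  apply Set.Finite.of_finite_image (f := fun l : List P => {p | p ∈ l})
  · apply Set.Finite.subset (hP.locFin x y).finite_subsets
    rintro s ⟨l, hl, rfl⟩ p hp
    exact Set.mem_Icc.mpr (cc_le_of_mem hl p hp)
  · intro l1 h1 l2 h2 he
    haveI : IsAntisymm P (· < ·) := ⟨fun a b h1 h2 => (lt_asymm h1 h2).elim⟩
    have ht : l1.toFinset = l2.toFinset := by
      ext p; simpa using Set.ext_iff.mp he p
    exact List.Perm.eq_of_pairwise'
      (cc_pairwise h1) (cc_pairwise h2)
      (List.perm_of_nodup_nodup_toFinset_eq (cc_nodup h1) (cc_nodup h2) ht)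

lemma rank_exists (p : P) : ∃ n, HasRankFrom b p n := by
  obtain ⟨l, hl⟩ := hP.chain_nonempty b p (hP.bot_le p)
  have : 1 ≤ l.length := List.length_pos_iff.mpr (cc_ne_nil hl)
  exact ⟨l.length - 1, l, hl, by omega⟩

lemma rank_unique {m : ℕ} (h1 : HasRankFrom b x n) (h2 : HasRankFrom b x m) : n = m := by
  obtain ⟨l, hl, hln⟩ := h1
  obtain ⟨l', hl', hlm⟩ := h2
  have := hP.graded b x l hl l' hl'
  omega

lemma rank_add (hz : HasRankFrom b z i) (hm : m ∈ CovChains z y) :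
    HasRankFrom b y (i + (m.length - 1)) := by
  obtain ⟨l, hl, hln⟩ := hz
  obtain ⟨hmem, hlen⟩ := cc_concat hl hm
  have h1 : 1 ≤ m.length := List.length_pos_iff.mpr (cc_ne_nil hm)
  exact ⟨l ++ m.tail, hmem, by omega⟩

lemma cc_len_eq (hz : HasRankFrom b z i) (hy : HasRankFrom b y n)
    (hm : m ∈ CovChains z y) : m.length = n - i + 1 ∧ i ≤ n := by
  have h1 : 1 ≤ m.length := List.length_pos_iff.mpr (cc_ne_nil hm)
  have := rank_unique hP (rank_add hP hz hm) hy
  omega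

lemma rank_lt_of_lt (hzy : z < y) (hz : HasRankFrom b z i) (hy : HasRankFrom b y n) :
    i < n := by
  obtain ⟨m, hm⟩ := hP.chain_nonempty z y hzy.le
  have h2 : 2 ≤ m.length := by
    rcases Nat.lt_or_ge m.length 2 with h | h
    · have h1 : 1 ≤ m.length := List.length_pos_iff.mpr (cc_ne_nil hm)
      interval_cases hl : m.length
      · obtain ⟨t, rfl⟩ := cc_exists_cons hm
        have : t = [] := by simpa using hl
        subst this
        have : z = y := by simpa using hm.2.2
        exact absurd this hzy.ne
    · exact h
  have := rank_unique hP (rank_add hP hz hm) hy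
  omega

lemma rank_le_of_le (hzy : z ≤ y) (hz : HasRankFrom b z i) (hy : HasRankFrom b y n) :
    i ≤ n := by
  rcases eq_or_lt_of_le hzy with rfl | h
  · exact le_of_eq (rank_unique hP hz hy)
  · exact (rank_lt_of_lt hP h hz hy).le

lemma rank_covby (hzq : z ⋖ q) (hq : HasRankFrom b q (n + 1)) : HasRankFrom b z n := by
  obtain ⟨i, hz⟩ := rank_exists hP z
  have hm : [z, q] ∈ CovChains z q :=
    ⟨List.isChain_pair.mpr hzq, rfl, rfl⟩
  have := rank_unique hP (rank_add hP hz hm) hq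
  have : i = n := by simpa using this
  exact this ▸ hz

lemma rank_covby' (hzq : z ⋖ q) (hz : HasRankFrom b z n) : HasRankFrom b q (n + 1) := by
  have hm : [z, q] ∈ CovChains z q := ⟨List.isChain_pair.mpr hzq, rfl, rfl⟩
  have := rank_add hP hz hm
  simpa using this

lemma level_zero : levelSet b 0 = {b} := by
  ext p
  constructor
  · rintro ⟨l, hl, hlen⟩
    obtain ⟨t, rfl⟩ := cc_exists_cons hl
    have : t = [] := by simpa using hlen
    subst this
    have : b = p := by simpa using hl.2.2
    exact this ▸ rfl
  · intro hp
    rw [show p = b from hp]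
    exact ⟨[b], singleton_mem_cc b, rfl⟩

end Rank

section Rank2
variable {P : Type*} [PartialOrder P] {b x y z q p : P} {A : ℕ → ℕ} {n i : ℕ} {l m : List P}

noncomputable def rkF (hP : IsBinomialPoset P b A) (p : P) : ℕ :=
  Classical.choose (rank_exists hP p)

lemma rkF_spec (hP : IsBinomialPoset P b A) (p : P) : HasRankFrom b p (rkF hP p) :=
  Classical.choose_spec (rank_exists hP p)

lemma rkF_strictMono (hP : IsBinomialPoset P b A) : StrictMono (rkF hP) :=
  fun _ _ h => rank_lt_of_lt hP h (rkF_spec hP _) (rkF_spec hP _)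

variable (hP : IsBinomialPoset P b A)
include hP

lemma atomset_finite (x u : P) : {z | x ⋖ z ∧ z ≤ u}.Finite :=
  (hP.locFin x u).subset (fun z hz => Set.mem_Icc.mpr ⟨hz.1.le, hz.2⟩)

lemma atomset_card (hxu : HasRankFrom b x i) (huu : HasRankFrom b u n) (hle : x ≤ u)
    (h1 : i < n) : {z | x ⋖ z ∧ z ≤ u}.ncard = A (n - i) := by
  obtain ⟨m, hm⟩ := hP.chain_nonempty x u hle
  obtain ⟨hlen, hin⟩ := cc_len_eq hP hxu huu hm
  exact hP.atoms x u (n - i) (by omega) ⟨m, hm, by omega⟩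

lemma rank_b : HasRankFrom b b 0 := ⟨[b], singleton_mem_cc b, rfl⟩

lemma A_pos (h1 : 1 ≤ n) : 1 ≤ A n := by
  obtain ⟨x, hx⟩ := hP.allLengths n
  obtain ⟨l, hl, hlen⟩ := hx
  obtain ⟨z, t, hlz, hbz, ht⟩ := cc_decompose_cons hl (by omega)
  have hnonempty : {w : P | b ⋖ w ∧ w ≤ x}.Nonempty := ⟨z, hbz, cc_le ht⟩
  have hcard := hP.atoms b x n h1 ⟨l, hl, hlen⟩
  have := (Set.ncard_pos (atomset_finite hP b x)).mpr hnonempty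
  omega

variable {c : ℕ → P} {N a : ℕ}

lemma rk_c_large (hc : StrictMono c) (j : ℕ) : j ≤ rkF hP (c j) := by
  have : StrictMono (fun j => rkF hP (c j)) := (rkF_strictMono hP).comp hc
  exact this.le_apply

lemma atomset_c_card (hc : StrictMono c) (hcov : ∀ p : P, ∃ i, p ≤ c i)
    (hlim : ∀ n, N ≤ n → A n = a) (p : P) {i0 : ℕ} (hi0 : p ≤ c i0) {j : ℕ}
    (hj : max i0 (rkF hP p + N + 1) ≤ j) :
    p ≤ c j ∧ {z | p ⋖ z ∧ z ≤ c j}.ncard = a := by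
  have hpj : p ≤ c j := hi0.trans (hc.monotone ((le_max_left _ _).trans hj))
  have hru : rkF hP p + N + 1 ≤ rkF hP (c j) :=
    ((le_max_right _ _).trans hj).trans (rk_c_large hP hc j)
  have hcard := atomset_card hP (rkF_spec hP p) (rkF_spec hP (c j)) hpj (by omega)
  rw [hcard, hlim _ (by omega)]
  exact ⟨hpj, rfl⟩

lemma covers_eq (hc : StrictMono c) (hcov : ∀ p : P, ∃ i, p ≤ c i)
    (hlim : ∀ n, N ≤ n → A n = a) (p : P) :
    ∃ u : P, {q | p ⋖ q} = {z | p ⋖ z ∧ z ≤ u} ∧ {z | p ⋖ z ∧ z ≤ u}.ncard = a := by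
  obtain ⟨i0, hi0⟩ := hcov p
  set j0 := max i0 (rkF hP p + N + 1) with hj0
  refine ⟨c j0, ?_, (atomset_c_card hP hc hcov hlim p hi0 le_rfl).2⟩
  ext q
  simp only [Set.mem_setOf_eq]
  constructor
  · intro hpq
    obtain ⟨iq, hiq⟩ := hcov q
    set j := max j0 iq with hj
    have h1 := atomset_c_card hP hc hcov hlim p hi0 (le_max_left _ _ : j0 ≤ j)
    have h0 := atomset_c_card hP hc hcov hlim p hi0 (le_rfl : j0 ≤ j0)
    have hsub : {z | p ⋖ z ∧ z ≤ c j0} ⊆ {z | p ⋖ z ∧ z ≤ c j} :=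
      fun z hz => ⟨hz.1, hz.2.trans (hc.monotone (le_max_left _ _))⟩
    have heq : {z | p ⋖ z ∧ z ≤ c j0} = {z | p ⋖ z ∧ z ≤ c j} :=
      Set.eq_of_subset_of_ncard_le hsub (le_of_eq (h1.2.trans h0.2.symm)) (atomset_finite hP p (c j))
    have hq : q ∈ {z | p ⋖ z ∧ z ≤ c j} := ⟨hpq, hiq.trans (hc.monotone (le_max_right _ _))⟩
    rw [← heq] at hq
    exact ⟨hq.1, hq.2⟩
  · exact fun h => h.1

lemma covers_ncard (hc : StrictMono c) (hcov : ∀ p : P, ∃ i, p ≤ c i)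
    (hlim : ∀ n, N ≤ n → A n = a) (p : P) :
    {q | p ⋖ q}.ncard = a ∧ {q | p ⋖ q}.Finite := by
  obtain ⟨u, hu, hcard⟩ := covers_eq hP hc hcov hlim p
  exact ⟨hu ▸ hcard, hu ▸ atomset_finite hP p u⟩

lemma A_le_a (hc : StrictMono c) (hcov : ∀ p : P, ∃ i, p ≤ c i)
    (hlim : ∀ n, N ≤ n → A n = a) (h1 : 1 ≤ n) : A n ≤ a := by
  obtain ⟨x, hx⟩ := hP.allLengths n
  have hcx := hP.atoms b x n h1 hx
  obtain ⟨i0, hi0⟩ := hcov x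
  set j := max i0 (n + N + 1) with hj
  have hxj : x ≤ c j := hi0.trans (hc.monotone (le_max_left _ _))
  have hru : n + N + 1 ≤ rkF hP (c j) := by
    have h2 := rank_le_of_le hP hxj hx (rkF_spec hP (c j))
    have := rk_c_large hP hc j
    omega
  have hbu : b ≤ c j := hP.bot_le _
  have hcard := atomset_card hP (rank_b hP) (rkF_spec hP (c j)) hbu (by omega)
  rw [Nat.sub_zero, hlim _ (by omega)] at hcard
  have hsub : {z | b ⋖ z ∧ z ≤ x} ⊆ {z | b ⋖ z ∧ z ≤ c j} :=
    fun z hz => ⟨hz.1, hz.2.trans hxj⟩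
  have := Set.ncard_le_ncard hsub (atomset_finite hP b (c j))
  omega

lemma level_succ_subset (i : ℕ) :
    levelSet b (i + 1) ⊆ ⋃ z ∈ levelSet b i, {q : P | z ⋖ q} := by
  rintro q ⟨l, hl, hlen⟩
  obtain ⟨z, m, hlm, hm, hzq⟩ := cc_decompose_last hl (by omega)
  have hmlen : m.length = i + 1 := by
    have : l.length = m.length + 1 := by rw [hlm]; simp
    omega
  exact Set.mem_biUnion (⟨m, hm, hmlen⟩ : HasRankFrom b z i) hzq

lemma level_finite (covfin : ∀ p : P, {q | p ⋖ q}.Finite) (i : ℕ) :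
    (levelSet b i).Finite := by
  induction i with
  | zero => rw [level_zero hP]; exact Set.finite_singleton b
  | succ i ih =>
    exact ((ih.biUnion (fun z _ => covfin z)).subset (level_succ_subset hP i))

lemma univ_eq_union_levels : (Set.univ : Set P) = ⋃ i, levelSet b i := by
  ext p
  simp only [Set.mem_univ, true_iff, Set.mem_iUnion]
  exact rank_exists hP p

end Rank2

lemma ncard_biUnion_eq {α β : Type*} (s : Finset α) (f : α → Set β)
    (hf : ∀ z ∈ s, (f z).Finite)
    (hdisj : ∀ z ∈ s, ∀ z' ∈ s, z ≠ z' → Disjoint (f z) (f z')) :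
    (⋃ z ∈ s, f z).ncard = ∑ z ∈ s, (f z).ncard := by
  classical
  induction s using Finset.induction_on with
  | empty => simp
  | @insert a s ha ih =>
    have hfin2 : (⋃ x ∈ s, f x).Finite :=
      Set.Finite.biUnion s.finite_toSet (fun z hz => hf z (Finset.mem_insert_of_mem hz))
    have hdisj2 : Disjoint (f a) (⋃ x ∈ s, f x) := by
      rw [Set.disjoint_left]
      rintro x hxa hx
      obtain ⟨z, hz, hxz⟩ := Set.mem_iUnion₂.mp hx
      exact Set.disjoint_left.mp
        (hdisj a (Finset.mem_insert_self a s) z (Finset.mem_insert_of_mem hz)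
          (fun h => ha (h ▸ hz))) hxa hxz
    rw [Finset.set_biUnion_insert, Finset.sum_insert ha,
      Set.ncard_union_eq hdisj2 (hf a (Finset.mem_insert_self a s)) hfin2,
      ih (fun z hz => hf z (Finset.mem_insert_of_mem hz))
        (fun z hz z' hz' hne => hdisj z (Finset.mem_insert_of_mem hz)
          z' (Finset.mem_insert_of_mem hz') hne)]

section Count
variable {P : Type*} [PartialOrder P] {b x y z q p : P} {A : ℕ → ℕ} {n i : ℕ} {l m : List P}

noncomputable def wit (hP : IsBinomialPoset P b A) (n : ℕ) : P :=
  Classical.choose (hP.allLengths n)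

lemma wit_spec (hP : IsBinomialPoset P b A) (n : ℕ) : HasRankFrom b (wit hP n) n :=
  Classical.choose_spec (hP.allLengths n)

noncomputable def cnt (hP : IsBinomialPoset P b A) (n : ℕ) : ℕ :=
  (CovChains b (wit hP n)).ncard

variable (hP : IsBinomialPoset P b A)
include hP

lemma cc_ncard_eq (h : ∃ l ∈ CovChains x y, l.length = n + 1) :
    (CovChains x y).ncard = cnt hP n :=
  hP.count x y b (wit hP n) n h (wit_spec hP n)

lemma cc_self_eq : CovChains b b = {[b]} := by
  ext l
  exact ⟨fun hl => cc_self hl, fun hl => hl ▸ singleton_mem_cc b⟩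

lemma cnt_zero : cnt hP 0 = 1 := by
  have h := cc_ncard_eq hP (x := b) (y := b) (n := 0) (rank_b hP)
  rw [cc_self_eq hP, Set.ncard_singleton] at h
  exact h.symm

lemma cnt_succ (n : ℕ) : cnt hP (n + 1) = A (n + 1) * cnt hP n := by
  classical
  set y := wit hP (n + 1) with hy'
  have hy : HasRankFrom b y (n + 1) := wit_spec hP (n + 1)
  have hfinS : {z : P | b ⋖ z ∧ z ≤ y}.Finite := atomset_finite hP b y
  set sF := hfinS.toFinset with hsF
  have hdecomp : CovChains b y = ⋃ z ∈ sF, (List.cons b) '' CovChains z y := by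
    ext l
    constructor
    · intro hl
      have hlen : l.length = n + 2 := by
        obtain ⟨l', hl', hlen'⟩ := hy
        rw [hP.graded b y l hl l' hl']; omega
      obtain ⟨z, t, rfl, hbz, ht⟩ := cc_decompose_cons hl (by omega)
      exact Set.mem_biUnion (hfinS.mem_toFinset.mpr ⟨hbz, cc_le ht⟩) ⟨t, ht, rfl⟩
    · intro hl
      obtain ⟨z, hz, hl⟩ := Set.mem_iUnion₂.mp hl
      obtain ⟨t, ht, rfl⟩ := hl
      exact cc_cons (hfinS.mem_toFinset.mp hz).1 ht
  have hterm : ∀ z ∈ sF, ((List.cons b) '' CovChains z y).ncard = cnt hP n := by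
    intro z hz
    rw [Set.ncard_image_of_injective _ List.cons_injective]
    obtain ⟨hbz, hzy⟩ := hfinS.mem_toFinset.mp hz
    obtain ⟨t, ht⟩ := hP.chain_nonempty z y hzy
    have hmem := cc_cons hbz ht
    have hlen : (b :: t).length = n + 2 := by
      obtain ⟨l', hl', hlen'⟩ := hy
      rw [hP.graded b y _ hmem l' hl']; omega
    exact cc_ncard_eq hP ⟨t, ht, by simpa using hlen⟩
  have hdisj : ∀ z ∈ sF, ∀ z' ∈ sF, z ≠ z' →
      Disjoint ((List.cons b) '' CovChains z y) ((List.cons b) '' CovChains z' y) := by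
    intro z _ z' _ hne
    rw [Set.disjoint_left]
    rintro l ⟨t, ht, rfl⟩ ⟨t', ht', heq⟩
    have : t' = t := List.cons_injective heq
    subst this
    exact hne (Option.some_inj.mp (ht.2.1.symm.trans ht'.2.1))
  have hcardS : sF.card = A (n + 1) := by
    rw [← Set.ncard_eq_toFinset_card _ hfinS]
    exact hP.atoms b y (n + 1) (by omega) hy
  calc cnt hP (n + 1) = (CovChains b y).ncard := (cc_ncard_eq hP hy).symm
    _ = ∑ z ∈ sF, ((List.cons b) '' CovChains z y).ncard := by
        rw [hdecomp]
        exact ncard_biUnion_eq sF _ (fun z _ => ((cc_finite hP _ _).image _)) hdisj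
    _ = ∑ _z ∈ sF, cnt hP n := Finset.sum_congr rfl hterm
    _ = A (n + 1) * cnt hP n := by rw [Finset.sum_const, smul_eq_mul, hcardS]

lemma cnt_eq_B (n : ℕ) : cnt hP n = Bfun A n := by
  induction n with
  | zero => rw [cnt_zero hP]; simp [Bfun]
  | succ n ih =>
    rw [cnt_succ hP n, ih, Bfun, Bfun, Finset.prod_Icc_succ_top (by omega)]
    ring

lemma cnt_pos (n : ℕ) : 0 < cnt hP n := by
  rw [cnt_eq_B hP]
  exact Finset.prod_pos fun i hi => A_pos hP (Finset.mem_Icc.mp hi).1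

lemma coat_finite (q : P) : {z : P | z ⋖ q}.Finite :=
  (hP.locFin b q).subset (fun z hz => Set.mem_Icc.mpr ⟨hP.bot_le z, hz.le⟩)

lemma coat_card (hq : HasRankFrom b q (i + 1)) :
    {z : P | z ⋖ q}.ncard * cnt hP i = cnt hP (i + 1) := by
  classical
  have hfinS : {z : P | z ⋖ q}.Finite := coat_finite hP q
  set sF := hfinS.toFinset with hsF
  have hdecomp : CovChains b q = ⋃ z ∈ sF, (· ++ [q]) '' CovChains b z := by
    ext l
    constructor
    · intro hl
      have hlen : l.length = i + 2 := by
        obtain ⟨l', hl', hlen'⟩ := hq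
        rw [hP.graded b q l hl l' hl']; omega
      obtain ⟨z, m, rfl, hm, hzq⟩ := cc_decompose_last hl (by omega)
      exact Set.mem_biUnion (hfinS.mem_toFinset.mpr hzq) ⟨m, hm, rfl⟩
    · intro hl
      obtain ⟨z, hz, hl⟩ := Set.mem_iUnion₂.mp hl
      obtain ⟨m, hm, rfl⟩ := hl
      exact cc_append_single hm (hfinS.mem_toFinset.mp hz)
  have hinj : Function.Injective (fun m : List P => m ++ [q]) := by
    intro m1 m2 h
    have := congrArg List.dropLast h
    simpa [List.dropLast_concat] using this
  have hterm : ∀ z ∈ sF, ((· ++ [q]) '' CovChains b z).ncard = cnt hP i := by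
    intro z hz
    rw [Set.ncard_image_of_injective _ hinj]
    have hzq := hfinS.mem_toFinset.mp hz
    obtain ⟨m, hm⟩ := hP.chain_nonempty b z (hP.bot_le z)
    have hmem := cc_append_single hm hzq
    have hlen : (m ++ [q]).length = i + 2 := by
      obtain ⟨l', hl', hlen'⟩ := hq
      rw [hP.graded b q _ hmem l' hl']; omega
    exact cc_ncard_eq hP ⟨m, hm, by simp at hlen; omega⟩
  have hdisj : ∀ z ∈ sF, ∀ z' ∈ sF, z ≠ z' →
      Disjoint ((· ++ [q]) '' CovChains b z) ((· ++ [q]) '' CovChains b z') := by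
    intro z _ z' _ hne
    rw [Set.disjoint_left]
    rintro l ⟨m, hm, rfl⟩ ⟨m', hm', heq⟩
    have : m' = m := hinj heq
    subst this
    exact hne (Option.some_inj.mp (hm.2.2.symm.trans hm'.2.2))
  have : (CovChains b q).ncard = sF.card * cnt hP i := by
    rw [hdecomp, ncard_biUnion_eq sF _ (fun z _ => ((cc_finite hP _ _).image _)) hdisj,
      Finset.sum_congr rfl hterm, Finset.sum_const, smul_eq_mul]
  rw [← cc_ncard_eq hP hq, this, Set.ncard_eq_toFinset_card _ hfinS]

lemma coat_ncard (hq : HasRankFrom b q (i + 1)) :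
    {z : P | z ⋖ q}.ncard = A (i + 1) := by
  have h1 := coat_card hP hq
  rw [cnt_succ hP i] at h1
  exact Nat.eq_of_mul_eq_mul_right (cnt_pos hP i) h1

end Count

section MainCount
variable {P : Type*} [PartialOrder P] {b q p : P} {A : ℕ → ℕ} {a N : ℕ} {c : ℕ → P}
variable (hP : IsBinomialPoset P b A) (hc : StrictMono c) (hcov : ∀ p : P, ∃ i, p ≤ c i)
  (hlim : ∀ n, N ≤ n → A n = a)
include hP hc hcov hlim

lemma level_step (i : ℕ) :
    (levelSet b i).ncard * a = (levelSet b (i + 1)).ncard * A (i + 1) := by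
  classical
  have covfin : ∀ p : P, {q : P | p ⋖ q}.Finite :=
    fun p => (covers_ncard hP hc hcov hlim p).2
  have hfi : (levelSet b i).Finite := level_finite hP covfin i
  have hfi1 : (levelSet b (i + 1)).Finite := level_finite hP covfin (i + 1)
  set Xi := hfi.toFinset with hXi
  set Xi1 := hfi1.toFinset with hXi1
  have row : ∀ z ∈ Xi, ∑ q ∈ Xi1, (if z ⋖ q then 1 else 0) = a := by
    intro z hz
    have hzr : HasRankFrom b z i := hfi.mem_toFinset.mp hz
    rw [← Finset.card_filter]
    have hfe : Xi1.filter (fun q => z ⋖ q) = (covfin z).toFinset := by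
      ext q
      simp only [Finset.mem_filter, Set.Finite.mem_toFinset]
      constructor
      · exact fun h => h.2
      · exact fun h => ⟨hfi1.mem_toFinset.mpr (rank_covby' hP h hzr), h⟩
    rw [hfe, ← Set.ncard_eq_toFinset_card _ (covfin z)]
    exact (covers_ncard hP hc hcov hlim z).1
  have col : ∀ q ∈ Xi1, ∑ z ∈ Xi, (if z ⋖ q then 1 else 0) = A (i + 1) := by
    intro q hq
    have hqr : HasRankFrom b q (i + 1) := hfi1.mem_toFinset.mp hq
    rw [← Finset.card_filter]
    have hfe : Xi.filter (fun z => z ⋖ q) = (coat_finite hP q).toFinset := by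
      ext z
      simp only [Finset.mem_filter, Set.Finite.mem_toFinset]
      constructor
      · exact fun h => h.2
      · exact fun h => ⟨hfi.mem_toFinset.mpr (rank_covby hP h hqr), h⟩
    rw [hfe, ← Set.ncard_eq_toFinset_card _ (coat_finite hP q)]
    exact coat_ncard hP hqr
  have hsum : ∑ z ∈ Xi, ∑ q ∈ Xi1, (if z ⋖ q then (1:ℕ) else 0)
      = ∑ q ∈ Xi1, ∑ z ∈ Xi, (if z ⋖ q then (1:ℕ) else 0) := Finset.sum_comm
  rw [Finset.sum_congr rfl row, Finset.sum_congr rfl col, Finset.sum_const, Finset.sum_const,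
    smul_eq_mul, smul_eq_mul] at hsum
  rw [Set.ncard_eq_toFinset_card _ hfi, Set.ncard_eq_toFinset_card _ hfi1]
  exact hsum

lemma levels_card (i : ℕ) : (levelSet b i).ncard * Bfun A i = a ^ i := by
  induction i with
  | zero => rw [level_zero hP, Set.ncard_singleton]; simp [Bfun]
  | succ i ih =>
    have hB : Bfun A (i + 1) = Bfun A i * A (i + 1) := by
      rw [Bfun, Bfun, Finset.prod_Icc_succ_top (by omega)]
    calc (levelSet b (i + 1)).ncard * Bfun A (i + 1)
        = ((levelSet b (i + 1)).ncard * A (i + 1)) * Bfun A i := by rw [hB]; ring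
      _ = ((levelSet b i).ncard * a) * Bfun A i := by
          rw [← level_step hP hc hcov hlim i]
      _ = a * ((levelSet b i).ncard * Bfun A i) := by ring
      _ = a ^ (i + 1) := by rw [ih]; ring

end MainCount

/-- If the atomic function `A` of a strongly confluent infinite downward
bounded binomial poset has finite limit `a` (it is eventually equal to `a`), then
`|X_i| * B(i) = a ^ i` for all `i`; the supremum of the `|X_i|` equals their limit and
equals `∏_{i=1}^∞ (a / A(i))`; the poset is countable; and every element is covered by
exactly `a` elements. -/
theorem binomialPoset_bounded_atomic_levels
    (P : Type*) [PartialOrder P] [Infinite P] (b : P) (A : ℕ → ℕ) (a : ℕ)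
    (hP : IsBinomialPoset P b A) (hconf : StronglyConfluent P)
    (hlim : ∃ N : ℕ, ∀ n : ℕ, N ≤ n → A n = a) :
    (∀ i : ℕ, (levelSet b i).ncard * Bfun A i = a ^ i) ∧
    Filter.Tendsto (fun i : ℕ => ((levelSet b i).ncard : ℝ)) Filter.atTop
      (nhds (∏' j : ℕ, ((a : ℝ) / (A (j + 1) : ℝ)))) ∧
    (⨆ i : ℕ, ((levelSet b i).ncard : ℝ)) = ∏' j : ℕ, ((a : ℝ) / (A (j + 1) : ℝ)) ∧
    Countable P ∧
    (∀ p : P, {q : P | p ⋖ q}.ncard = a) := by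

  obtain ⟨c, hc, hcov⟩ := hconf
  obtain ⟨N, hlimN⟩ := hlim
  have covfin : ∀ p : P, {q : P | p ⋖ q}.Finite :=
    fun p => (covers_ncard hP hc hcov hlimN p).2
  have hpart1 : ∀ i, (levelSet b i).ncard * Bfun A i = a ^ i :=
    levels_card hP hc hcov hlimN
  have ha1 : 1 ≤ a := by
    have h := A_pos hP (n := max N 1) (le_max_right _ _)
    rwa [hlimN _ (le_max_left _ _)] at h
  have hApos : ∀ n, 1 ≤ n → 1 ≤ A n := fun n h => A_pos hP h
  have hAle : ∀ n, 1 ≤ n → A n ≤ a := fun n h => A_le_a hP hc hcov hlimN h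
  set f : ℕ → ℝ := fun j => (a : ℝ) / (A (j + 1) : ℝ) with hf
  have hApos' : ∀ j : ℕ, (0 : ℝ) < (A (j + 1) : ℝ) := fun j => by
    exact_mod_cast hApos (j + 1) (by omega)
  have hane : (a : ℝ) ≠ 0 := by
    have : (0 : ℝ) < (a : ℝ) := by exact_mod_cast ha1
    exact ne_of_gt this
  have hf1 : ∀ j, N ≤ j → f j = 1 := by
    intro j hj
    rw [hf]
    simp only
    rw [hlimN (j + 1) (by omega)]
    exact div_self hane
  have hBrange : ∀ i, Bfun A i = ∏ j ∈ Finset.range i, A (j + 1) := by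
    intro i
    induction i with
    | zero => simp [Bfun]
    | succ i ih =>
      rw [Bfun, Finset.prod_Icc_succ_top (by omega), ← Bfun, ih, Finset.prod_range_succ]
  have hprodA : ∀ i, (0 : ℝ) < ∏ j ∈ Finset.range i, (A (j + 1) : ℝ) :=
    fun i => Finset.prod_pos fun j _ => hApos' j
  have hci : ∀ i, ((levelSet b i).ncard : ℝ) = ∏ j ∈ Finset.range i, f j := by
    intro i
    have h0 := hpart1 i
    rw [hBrange i] at h0
    have h1 : ((levelSet b i).ncard : ℝ) * ∏ j ∈ Finset.range i, (A (j + 1) : ℝ)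
        = (a : ℝ) ^ i := by exact_mod_cast h0
    have h2 : (∏ j ∈ Finset.range i, f j) * ∏ j ∈ Finset.range i, (A (j + 1) : ℝ)
        = (a : ℝ) ^ i := by
      rw [← Finset.prod_mul_distrib,
        Finset.prod_congr rfl (fun j _ => div_mul_cancel₀ (a : ℝ) (ne_of_gt (hApos' j))),
        Finset.prod_const, Finset.card_range]
    exact mul_right_cancel₀ (ne_of_gt (hprodA i)) (h1.trans h2.symm)
  set L := ∏ j ∈ Finset.range N, f j with hL
  have htp : ∏' j, f j = L :=
    tprod_eq_prod fun j hj => hf1 j (by simpa [Finset.mem_range, not_lt] using hj)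
  have hconst : ∀ i, N ≤ i → ((levelSet b i).ncard : ℝ) = L := by
    intro i hi
    rw [hci i, hL]
    exact (Finset.prod_subset (Finset.range_subset_range.mpr hi)
      (fun j hj hnj => hf1 j (by simpa [Finset.mem_range, not_lt] using hnj))).symm
  have hmono : Monotone (fun i => ((levelSet b i).ncard : ℝ)) := by
    apply monotone_nat_of_le_succ
    intro i
    show ((levelSet b i).ncard : ℝ) ≤ ((levelSet b (i + 1)).ncard : ℝ)
    rw [hci i, hci (i + 1), Finset.prod_range_succ]
    have h1f : 1 ≤ f i := by
      rw [hf]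
      simp only
      rw [le_div_iff₀ (hApos' i), one_mul]
      exact_mod_cast hAle (i + 1) (by omega)
    have hnn : 0 ≤ ∏ j ∈ Finset.range i, f j :=
      Finset.prod_nonneg fun j _ => le_of_lt (by
        rw [hf]; exact div_pos (by exact_mod_cast ha1) (hApos' j))
    exact le_mul_of_one_le_right hnn h1f
  have hub : ∀ i, ((levelSet b i).ncard : ℝ) ≤ L := by
    intro i
    calc ((levelSet b i).ncard : ℝ) ≤ ((levelSet b (max i N)).ncard : ℝ) :=
          hmono (le_max_left _ _)
      _ = L := hconst _ (le_max_right _ _)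
  refine ⟨hpart1, ?_, ?_, ?_, fun p => (covers_ncard hP hc hcov hlimN p).1⟩
  · rw [show (∏' j : ℕ, ((a : ℝ) / (A (j + 1) : ℝ))) = L from htp]
    exact tendsto_const_nhds.congr'
      (eventually_atTop.mpr ⟨N, fun i hi => (hconst i hi).symm⟩)
  · rw [show (∏' j : ℕ, ((a : ℝ) / (A (j + 1) : ℝ))) = L from htp]
    refine le_antisymm (ciSup_le hub) ?_
    have hLN : L = ((levelSet b N).ncard : ℝ) := (hconst N le_rfl).symm
    rw [hLN]
    exact le_ciSup ⟨L, by rintro x ⟨i, rfl⟩; exact hub i⟩ N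
  · have huniv : (Set.univ : Set P).Countable := by
      rw [univ_eq_union_levels hP]
      exact Set.countable_iUnion fun i => (level_finite hP covfin i).countable
    exact Set.countable_univ_iff.mp huniv
end

section
/- There are uncountably many (2^ℵ₀) isomorphism classes of strongly confluent infinite downward bounded binomial posets with atomic sequence (1,1,2,2,2,...). -/
open Relation Filter Topology

inductive Pt : Type
  | bot : Pt
  | atom : Bool → Pt
  | node : ℕ → Bool → Bool → Pt
  deriving DecidableEq

namespace Pt
def lvl : Pt → ℕ
  | bot => 0
  | atom _ => 1
  | node n _ _ => n + 2
end Pt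

def typ (f : ℕ → Bool) (n : ℕ) : Bool :=
  decide (3 ≤ n) && decide (n % 2 = 1) && f ((n - 3) / 2)

lemma typ_odd {f n} (h : typ f n = true) : n % 2 = 1 := by
  unfold typ at h
  simp only [Bool.and_eq_true, decide_eq_true_eq] at h
  exact h.1.2

def Ed (f : ℕ → Bool) : Pt → Pt → Prop
  | .bot, .atom _ => True
  | .atom t, .node m x _ => m = 0 ∧ x = t
  | .node n a b, .node m x y => m = n + 1 ∧ b = Bool.xor x (typ f (n + 2) && a && y)
  | _, _ => False

lemma Ed_lvl {f : ℕ → Bool} : ∀ {p q : Pt}, Ed f p q → q.lvl = p.lvl + 1 := by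
  intro p q h
  cases p <;> cases q <;> simp_all [Ed, Pt.lvl] <;> omega

def Ple (f : ℕ → Bool) (p q : Pt) : Prop := p = q ∨ Ed f p q ∨ p.lvl + 2 ≤ q.lvl

@[ext]
structure PtW (f : ℕ → Bool) where
  t : Pt
  deriving DecidableEq

instance (f : ℕ → Bool) : PartialOrder (PtW f) where
  le p q := Ple f p.t q.t
  le_refl p := Or.inl rfl
  le_trans p q r h1 h2 := by
    rcases h1 with h1 | h1 | h1
    · rw [show p = q from PtW.ext h1]; exact h2
    · rcases h2 with h2 | h2 | h2
      · rw [← show q = r from PtW.ext h2]; exact Or.inr (Or.inl h1)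
      · have e1 := Ed_lvl h1; have e2 := Ed_lvl h2
        exact Or.inr (Or.inr (by omega))
      · have e1 := Ed_lvl h1
        exact Or.inr (Or.inr (by omega))
    · rcases h2 with h2 | h2 | h2
      · rw [← show q = r from PtW.ext h2]; exact Or.inr (Or.inr h1)
      · have e2 := Ed_lvl h2
        exact Or.inr (Or.inr (by omega))
      · exact Or.inr (Or.inr (by omega))
  le_antisymm p q h1 h2 := by
    rcases h1 with h1 | h1 | h1
    · exact PtW.ext h1
    · rcases h2 with h2 | h2 | h2
      · exact (PtW.ext h2).symm
      · have e1 := Ed_lvl h1; have e2 := Ed_lvl h2; omega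
      · have e1 := Ed_lvl h1; omega
    · rcases h2 with h2 | h2 | h2
      · exact (PtW.ext h2).symm
      · have e2 := Ed_lvl h2; omega
      · omega

namespace PtW
variable {f : ℕ → Bool}

lemma le_def {p q : PtW f} : p ≤ q ↔ (p = q ∨ Ed f p.t q.t ∨ p.t.lvl + 2 ≤ q.t.lvl) := by
  constructor
  · intro h; rcases h with h | h | h
    · exact Or.inl (PtW.ext h)
    · exact Or.inr (Or.inl h)
    · exact Or.inr (Or.inr h)
  · intro h; rcases h with h | h | h
    · exact Or.inl (congrArg PtW.t h)
    · exact Or.inr (Or.inl h)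
    · exact Or.inr (Or.inr h)

lemma le_of_Ed {p q : PtW f} (h : Ed f p.t q.t) : p ≤ q := le_def.2 (Or.inr (Or.inl h))
lemma le_of_gap {p q : PtW f} (h : p.t.lvl + 2 ≤ q.t.lvl) : p ≤ q := le_def.2 (Or.inr (Or.inr h))

lemma lvl_le_of_le {p q : PtW f} (h : p ≤ q) : p.t.lvl ≤ q.t.lvl := by
  rcases le_def.1 h with h | h | h
  · rw [h]
  · have := Ed_lvl h; omega
  · omega

lemma lvl_lt_of_lt {p q : PtW f} (h : p < q) : p.t.lvl < q.t.lvl := by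
  rcases le_def.1 h.le with h' | h' | h'
  · exact absurd h' h.ne
  · have := Ed_lvl h'; omega
  · omega

lemma eq_of_le_lvl {p q : PtW f} (h : p ≤ q) (hl : q.t.lvl = p.t.lvl) : p = q := by
  rcases le_def.1 h with h' | h' | h'
  · exact h'
  · have := Ed_lvl h'; omega
  · omega

lemma lt_of_le_lvl {p q : PtW f} (h : p ≤ q) (hl : p.t.lvl < q.t.lvl) : p < q :=
  lt_of_le_of_ne h (fun e => by rw [e] at hl; omega)

lemma Ed_of_le_succ {p q : PtW f} (h : p ≤ q) (hl : q.t.lvl = p.t.lvl + 1) : Ed f p.t q.t := by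
  rcases le_def.1 h with h' | h' | h'
  · rw [h'] at hl; omega
  · exact h'
  · omega

end PtW

/-- The two upper covers of an element. -/
def cov (f : ℕ → Bool) : Pt → Bool → Pt
  | .bot, c => .atom c
  | .atom t, c => .node 0 t c
  | .node n a b, c => .node (n + 1) (Bool.xor b (typ f (n + 2) && a && c)) c

lemma Ed_cov (f : ℕ → Bool) (p : Pt) (c : Bool) : Ed f p (cov f p c) := by
  cases p with
  | bot => trivial
  | atom t => exact ⟨rfl, rfl⟩
  | node n a b =>
      refine ⟨rfl, ?_⟩
      cases b <;> cases c <;> cases a <;> cases typ f (n + 2) <;> rfl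

lemma Ed_iff {f : ℕ → Bool} {p q : Pt} : Ed f p q ↔ ∃ c, q = cov f p c := by
  constructor
  · intro h
    cases p with
    | bot => cases q with
      | atom c => exact ⟨c, rfl⟩
      | bot => exact absurd h (by simp [Ed])
      | node n a b => exact absurd h (by simp [Ed])
    | atom t =>
        cases q with
        | node m x y =>
            obtain ⟨hm, hx⟩ := h
            subst hm; subst hx
            exact ⟨y, rfl⟩
        | bot => exact absurd h (by simp [Ed])
        | atom c => exact absurd h (by simp [Ed])
    | node n a b =>
        cases q with
        | node m x y =>
            obtain ⟨hm, hx⟩ := h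
            subst hm; subst hx
            refine ⟨y, ?_⟩
            unfold cov
            congr 1
            cases x <;> cases y <;> cases a <;> cases typ f (n + 2) <;> rfl
        | bot => exact absurd h (by simp [Ed])
        | atom c => exact absurd h (by simp [Ed])
  · rintro ⟨c, rfl⟩; exact Ed_cov f p c

lemma cov_ne (f : ℕ → Bool) (p : Pt) : cov f p false ≠ cov f p true := by
  cases p <;> simp [cov]

lemma typ_not_consec {f : ℕ → Bool} {n : ℕ} (h : typ f n = true) : typ f (n + 1) = false := by
  have h1 := typ_odd h
  by_contra h2
  rw [Bool.not_eq_false] at h2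
  have := typ_odd h2
  omega

/-- Fullness of the two-step relation. -/
lemma two_step {f : ℕ → Bool} {p q : Pt} (h : q.lvl = p.lvl + 2) :
    ∃ z, Ed f p z ∧ Ed f z q := by
  cases p with
  | bot =>
      cases q with
      | node m x y =>
          simp [Pt.lvl] at h
          subst h
          exact ⟨.atom x, trivial, rfl, rfl⟩
      | bot => simp [Pt.lvl] at h
      | atom t => simp [Pt.lvl] at h
  | atom t =>
      cases q with
      | node m x y =>
          simp [Pt.lvl] at h
          subst h
          exact ⟨.node 0 t (Bool.xor x (typ f 2 && t && y)), ⟨rfl, rfl⟩, rfl, by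
            cases x <;> cases y <;> cases t <;> cases typ f 2 <;> rfl⟩
      | bot => simp [Pt.lvl] at h
      | atom c => simp [Pt.lvl] at h
  | node n a b =>
      cases q with
      | node m x y =>
          simp [Pt.lvl] at h
          subst h
          by_cases hc : (typ f (n + 2) && a) = true
          · have hT2 : typ f (n + 3) = false := typ_not_consec (by
              revert hc; cases typ f (n+2) <;> simp)
            refine ⟨.node (n + 1) (Bool.xor b x) x, ⟨rfl, ?_⟩, rfl, ?_⟩
            · rw [show (typ f (n + 2) && a && x) = x from by rw [hc, Bool.true_and]]
              cases b <;> cases x <;> rfl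
            · rw [show n + 1 + 2 = n + 3 from rfl, hT2]
              cases x <;> rfl
          · refine ⟨.node (n + 1) b (Bool.xor x (typ f (n + 3) && b && y)), ⟨rfl, ?_⟩, rfl, rfl⟩
            rw [show (typ f (n+2) && a) = false from by revert hc; cases (typ f (n+2) && a) <;> simp,
              Bool.false_and]
            cases b <;> rfl
      | bot => simp [Pt.lvl] at h
      | atom c => simp [Pt.lvl] at h

/-- Uniqueness of the middle element of a 2-interval. -/
lemma uniq2 {f : ℕ → Bool} {p z₁ z₂ q : Pt} (h1 : Ed f p z₁) (h1' : Ed f z₁ q)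
    (h2 : Ed f p z₂) (h2' : Ed f z₂ q) : z₁ = z₂ := by
  cases p with
  | bot =>
      cases z₁ with
      | atom t₁ => cases z₂ with
        | atom t₂ =>
            cases q with
            | node m x y =>
                obtain ⟨_, e1⟩ := h1'
                obtain ⟨_, e2⟩ := h2'
                rw [e1] at e2; rw [e2]
            | bot => exact absurd h1' (by simp [Ed])
            | atom c => exact absurd h1' (by simp [Ed])
        | bot => exact absurd h2 (by simp [Ed])
        | node _ _ _ => exact absurd h2 (by simp [Ed])
      | bot => exact absurd h1 (by simp [Ed])
      | node _ _ _ => exact absurd h1 (by simp [Ed])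
  | atom t =>
      cases z₁ with
      | node m₁ x₁ y₁ => cases z₂ with
        | node m₂ x₂ y₂ =>
            obtain ⟨hm₁, hx₁⟩ := h1
            obtain ⟨hm₂, hx₂⟩ := h2
            subst hm₁; subst hm₂; subst hx₁; subst hx₂
            cases q with
            | node r s u =>
                obtain ⟨hr₁, e1⟩ := h1'
                obtain ⟨hr₂, e2⟩ := h2'
                rw [e1, e2]
            | bot => exact absurd h1' (by simp [Ed])
            | atom c => exact absurd h1' (by simp [Ed])
        | bot => exact absurd h2 (by simp [Ed])
        | atom _ => exact absurd h2 (by simp [Ed])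
      | bot => exact absurd h1 (by simp [Ed])
      | atom _ => exact absurd h1 (by simp [Ed])
  | node n a b =>
      cases z₁ with
      | node m₁ x₁ y₁ => cases z₂ with
        | node m₂ x₂ y₂ =>
            obtain ⟨hm₁, e₁⟩ := h1
            obtain ⟨hm₂, e₂⟩ := h2
            subst hm₁; subst hm₂
            cases q with
            | node r s u =>
                obtain ⟨hr₁, e1'⟩ := h1'
                obtain ⟨hr₂, e2'⟩ := h2'
                have hT : ¬(typ f (n + 2) = true ∧ typ f (n + 1 + 2) = true) := by
                  rintro ⟨u1, u2⟩
                  have := typ_odd u1; have := typ_odd u2; omega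
                congr 1
                all_goals {
                  revert e₁ e₂ e1' e2' hT
                  cases typ f (n + 2) <;> cases typ f (n + 1 + 2) <;>
                    cases a <;> cases b <;> cases x₁ <;> cases y₁ <;> cases x₂ <;> cases y₂ <;>
                    cases s <;> cases u <;> simp
                }
            | bot => exact absurd h1' (by simp [Ed])
            | atom c => exact absurd h1' (by simp [Ed])
        | bot => exact absurd h2 (by simp [Ed])
        | atom _ => exact absurd h2 (by simp [Ed])
      | bot => exact absurd h1 (by simp [Ed])
      | atom _ => exact absurd h1 (by simp [Ed])

namespace PtW
variable {f : ℕ → Bool}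

/-- Cover relation in `PtW f` is exactly `Ed`. -/
lemma covBy_iff {p q : PtW f} : p ⋖ q ↔ Ed f p.t q.t := by
  constructor
  · intro h
    rcases le_def.1 h.le with h' | h' | h'
    · exact absurd h' h.lt.ne
    · exact h'
    · exfalso
      rcases Nat.lt_or_ge (p.t.lvl + 2) q.t.lvl with hg | hg
      · -- gap ≥ 3 : use any cover
        have hz : Ed f p.t (cov f p.t false) := Ed_cov f p.t false
        have hzl := Ed_lvl hz
        have h1 : p < ⟨cov f p.t false⟩ := lt_of_le_lvl (le_of_Ed hz) (by simp at hzl ⊢; omega)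
        have h2 : (⟨cov f p.t false⟩ : PtW f) < q := lt_of_le_lvl (le_of_gap (by simp; omega))
            (by simp; omega)
        exact h.2 h1 h2
      · -- gap = 2
        have hq : q.t.lvl = p.t.lvl + 2 := by omega
        obtain ⟨z, hz1, hz2⟩ := two_step (f := f) hq
        have e1 := Ed_lvl hz1
        have h1 : p < ⟨z⟩ := lt_of_le_lvl (le_of_Ed hz1) (by simp; omega)
        have h2 : (⟨z⟩ : PtW f) < q := lt_of_le_lvl (le_of_Ed hz2) (by simp; omega)
        exact h.2 h1 h2
  · intro h
    have hl := Ed_lvl h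
    constructor
    · exact lt_of_le_lvl (le_of_Ed h) (by omega)
    · intro z h1 h2
      have := lvl_lt_of_lt h1
      have := lvl_lt_of_lt h2
      omega

lemma chain_len : ∀ (l : List (PtW f)) (x y : PtW f), l.Chain' (· ⋖ ·) →
    l.head? = some x → l.getLast? = some y → l.length + x.t.lvl = y.t.lvl + 1 := by
  intro l
  induction l with
  | nil => intro x y _ hx _; simp at hx
  | cons a l ih =>
      intro x y hc hx hy
      have hax : a = x := by simpa using hx
      subst hax
      cases l with
      | nil =>
          have : a = y := by simpa using hy
          subst this; simp; omega
      | cons b l' =>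
          replace hc := List.isChain_cons_cons.1 hc
          have hby := ih b y hc.2 rfl (by simpa using hy)
          have := Ed_lvl (covBy_iff.1 hc.1)
          simp only [List.length_cons] at hby ⊢
          omega

lemma chain_le : ∀ (l : List (PtW f)) (x y : PtW f), l.Chain' (· ⋖ ·) →
    l.head? = some x → l.getLast? = some y → x ≤ y := by
  intro l
  induction l with
  | nil => intro x y _ hx _; simp at hx
  | cons a l ih =>
      intro x y hc hx hy
      have hax : a = x := by simpa using hx
      subst hax
      cases l with
      | nil => have : a = y := by simpa using hy
               subst this; rfl
      | cons b l' =>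
          replace hc := List.isChain_cons_cons.1 hc
          exact le_trans hc.1.le (ih b y hc.2 rfl (by simpa using hy))

lemma mem_chains_iff {x y : PtW f} (hne : x ≠ y) {l : List (PtW f)} :
    l ∈ CovChains x y ↔ ∃ z t, Ed f x.t z.t ∧ t ∈ CovChains z y ∧ l = x :: t := by
  constructor
  · rintro ⟨hc, hh, hl⟩
    cases l with
    | nil => simp at hh
    | cons a t =>
        have hax : a = x := by simpa using hh
        subst hax
        cases t with
        | nil =>
            exfalso; apply hne
            have : a = y := by simpa using hl
            exact this
        | cons z t' =>
            replace hc := List.isChain_cons_cons.1 hc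
            exact ⟨z, z :: t', covBy_iff.1 hc.1, ⟨hc.2, rfl, by simpa using hl⟩, rfl⟩
  · rintro ⟨z, t, hE, ⟨hc, hh, hl⟩, rfl⟩
    cases t with
    | nil => simp at hh
    | cons z' t' =>
        have : z' = z := by simpa using hh
        subst this
        exact ⟨List.isChain_cons_cons.2 ⟨covBy_iff.2 hE, hc⟩, rfl, by simpa using hl⟩

end PtW

/-- Number of maximal chains in an interval of length `n`. -/
def Nc : ℕ → ℕ := fun n => if n ≤ 2 then 1 else 2 ^ (n - 2)

lemma Nc_pos (n : ℕ) : 0 < Nc n := by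
  unfold Nc; split
  · omega
  · positivity

namespace PtW
variable {f : ℕ → Bool}

lemma chains_self (x : PtW f) : CovChains x x = {[x]} := by
  ext l
  constructor
  · rintro h
    obtain ⟨hc, hh, hl⟩ := h
    have hlen := chain_len l x x hc hh hl
    cases l with
    | nil => simp at hh
    | cons a t =>
        cases t with
        | nil => simp_all
        | cons b t' => exfalso; simp at hlen; omega
  · rintro rfl
    exact ⟨List.isChain_singleton x, rfl, rfl⟩

lemma cons_image_finite_ncard (x : PtW f) (s : Set (List (PtW f))) (hs : s.Finite) :
    ((List.cons x) '' s).Finite ∧ ((List.cons x) '' s).ncard = s.ncard :=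
  ⟨hs.image _, Set.ncard_image_of_injective s (fun a b h => by simpa using h)⟩

lemma chains_spec : ∀ (n : ℕ) (x y : PtW f), x ≤ y → y.t.lvl = x.t.lvl + n →
    (CovChains x y).Finite ∧ (CovChains x y).ncard = Nc n := by
  intro n
  induction n using Nat.strong_induction_on with
  | _ n ih =>
    intro x y hxy hl
    match n with
    | 0 =>
        have : x = y := eq_of_le_lvl hxy hl
        subst this
        rw [chains_self]
        exact ⟨Set.finite_singleton _, by simp [Nc]⟩
    | 1 =>
        have hne : x ≠ y := fun e => by rw [e] at hl; omega
        have hE : Ed f x.t y.t := Ed_of_le_succ hxy hl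
        have hdec : CovChains x y = (List.cons x) '' CovChains y y := by
          ext l
          rw [mem_chains_iff hne]
          constructor
          · rintro ⟨z, t, hz, ht, rfl⟩
            have hzy : z = y := by
              have h1 := Ed_lvl hz
              exact eq_of_le_lvl (chain_le t z y ht.1 ht.2.1 ht.2.2) (by omega)
            subst hzy
            exact ⟨t, ht, rfl⟩
          · rintro ⟨t, ht, rfl⟩
            exact ⟨y, t, hE, ht, rfl⟩
        obtain ⟨h1, h2⟩ := ih 0 (by omega) y y le_rfl (by omega)
        rw [hdec]
        obtain ⟨hf, hc⟩ := cons_image_finite_ncard x _ h1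
        exact ⟨hf, by rw [hc, h2]; simp [Nc]⟩
    | 2 =>
        have hne : x ≠ y := fun e => by rw [e] at hl; omega
        obtain ⟨z₀, hz₀, hz₀'⟩ := two_step (f := f) hl
        have hdec : CovChains x y = (List.cons x) '' CovChains (⟨z₀⟩ : PtW f) y := by
          ext l
          rw [mem_chains_iff hne]
          constructor
          · rintro ⟨z, t, hz, ht, rfl⟩
            have hzy : z ≤ y := chain_le t z y ht.1 ht.2.1 ht.2.2
            have h1 := Ed_lvl hz
            have hE2 : Ed f z.t y.t := Ed_of_le_succ hzy (by omega)
            have : z.t = z₀ := uniq2 hz hE2 hz₀ hz₀'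
            have hzz : z = (⟨z₀⟩ : PtW f) := PtW.ext this
            subst hzz
            exact ⟨t, ht, rfl⟩
          · rintro ⟨t, ht, rfl⟩
            exact ⟨⟨z₀⟩, t, hz₀, ht, rfl⟩
        have hle : (⟨z₀⟩ : PtW f) ≤ y := le_of_Ed hz₀'
        have hlvl : y.t.lvl = (⟨z₀⟩ : PtW f).t.lvl + 1 := by
          have := Ed_lvl hz₀; have := Ed_lvl hz₀'; simp; omega
        obtain ⟨h1, h2⟩ := ih 1 (by omega) ⟨z₀⟩ y hle hlvl
        rw [hdec]
        obtain ⟨hf, hc⟩ := cons_image_finite_ncard x _ h1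
        exact ⟨hf, by rw [hc, h2]; simp [Nc]⟩
    | (m + 3) =>
        have hne : x ≠ y := fun e => by rw [e] at hl; omega
        set z₀ : PtW f := ⟨cov f x.t false⟩ with hz₀def
        set z₁ : PtW f := ⟨cov f x.t true⟩ with hz₁def
        have hE₀ : Ed f x.t z₀.t := Ed_cov f x.t false
        have hE₁ : Ed f x.t z₁.t := Ed_cov f x.t true
        have hl₀ := Ed_lvl hE₀
        have hl₁ := Ed_lvl hE₁
        have hle₀ : z₀ ≤ y := le_of_gap (by omega)
        have hle₁ : z₁ ≤ y := le_of_gap (by omega)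
        have hdec : CovChains x y =
            (List.cons x) '' CovChains z₀ y ∪ (List.cons x) '' CovChains z₁ y := by
          ext l
          rw [mem_chains_iff hne]
          constructor
          · rintro ⟨z, t, hz, ht, rfl⟩
            obtain ⟨c, hc⟩ := Ed_iff.1 hz
            have hzz : z = if c then z₁ else z₀ := by
              cases c <;> exact PtW.ext (by simpa using hc)
            cases c
            · simp at hzz; subst hzz; exact Or.inl ⟨t, ht, rfl⟩
            · simp at hzz; subst hzz; exact Or.inr ⟨t, ht, rfl⟩
          · rintro (⟨t, ht, rfl⟩ | ⟨t, ht, rfl⟩)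
            · exact ⟨z₀, t, hE₀, ht, rfl⟩
            · exact ⟨z₁, t, hE₁, ht, rfl⟩
        obtain ⟨hf₀, hc₀⟩ := ih (m + 2) (by omega) z₀ y hle₀ (by omega)
        obtain ⟨hf₁, hc₁⟩ := ih (m + 2) (by omega) z₁ y hle₁ (by omega)
        obtain ⟨hif₀, hic₀⟩ := cons_image_finite_ncard x _ hf₀
        obtain ⟨hif₁, hic₁⟩ := cons_image_finite_ncard x _ hf₁
        have hdisj : Disjoint ((List.cons x) '' CovChains z₀ y) ((List.cons x) '' CovChains z₁ y) := by
          rw [Set.disjoint_left]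
          rintro l ⟨t₀, ht₀, rfl⟩ ⟨t₁, ht₁, he⟩
          have : t₁ = t₀ := by simpa using he
          subst this
          have h0 : t₁.head? = some z₀ := ht₀.2.1
          have h1 : t₁.head? = some z₁ := ht₁.2.1
          rw [h0] at h1
          have : z₀ = z₁ := by simpa using h1
          exact cov_ne f x.t (congrArg PtW.t this)
        rw [hdec]
        refine ⟨hif₀.union hif₁, ?_⟩
        rw [Set.ncard_union_eq hdisj hif₀ hif₁, hic₀, hic₁, hc₀, hc₁]
        unfold Nc
        rcases Nat.eq_zero_or_pos m with rfl | hm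
        · norm_num
        · have h2 : ¬(m + 2 ≤ 2) := by omega
          have h3 : ¬(m + 3 ≤ 2) := by omega
          rw [if_neg h2, if_neg h3]
          have : m + 3 - 2 = (m + 2 - 2) + 1 := by omega
          rw [this, pow_succ]
          ring

end PtW

namespace PtW
variable {f : ℕ → Bool}

def botW (f : ℕ → Bool) : PtW f := ⟨Pt.bot⟩

lemma bot_le' (x : PtW f) : botW f ≤ x := by
  obtain ⟨xt⟩ := x
  cases xt with
  | bot => exact le_refl _
  | atom t => exact le_of_Ed trivial
  | node n a b => exact le_of_gap (by simp [botW, Pt.lvl])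

/-- Interval membership and length data from a chain. -/
lemma interval_data {x y : PtW f} {n : ℕ}
    (h : ∃ l ∈ CovChains x y, l.length = n + 1) : x ≤ y ∧ y.t.lvl = x.t.lvl + n := by
  obtain ⟨l, hl, hlen⟩ := h
  have h1 := chain_le l x y hl.1 hl.2.1 hl.2.2
  have h2 := chain_len l x y hl.1 hl.2.1 hl.2.2
  exact ⟨h1, by omega⟩

lemma atoms_set {x y : PtW f} {n : ℕ} (hn : 1 ≤ n) (hxy : x ≤ y)
    (hl : y.t.lvl = x.t.lvl + n) : {z : PtW f | x ⋖ z ∧ z ≤ y}.ncard = A112 n := by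
  match n with
  | 1 =>
      have : {z : PtW f | x ⋖ z ∧ z ≤ y} = {y} := by
        ext z
        simp only [Set.mem_setOf_eq, Set.mem_singleton_iff]
        constructor
        · rintro ⟨h1, h2⟩
          have := Ed_lvl (covBy_iff.1 h1)
          exact eq_of_le_lvl h2 (by omega)
        · rintro rfl
          exact ⟨covBy_iff.2 (Ed_of_le_succ hxy hl), le_refl _⟩
      rw [this, Set.ncard_singleton]; rfl
  | 2 =>
      obtain ⟨z₀, hz₀, hz₀'⟩ := two_step (f := f) hl
      have : {z : PtW f | x ⋖ z ∧ z ≤ y} = {(⟨z₀⟩ : PtW f)} := by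
        ext z
        simp only [Set.mem_setOf_eq, Set.mem_singleton_iff]
        constructor
        · rintro ⟨h1, h2⟩
          have hE := covBy_iff.1 h1
          have := Ed_lvl hE
          have hE2 : Ed f z.t y.t := Ed_of_le_succ h2 (by omega)
          exact PtW.ext (uniq2 hE hE2 hz₀ hz₀')
        · rintro rfl
          exact ⟨covBy_iff.2 hz₀, le_of_Ed hz₀'⟩
      rw [this, Set.ncard_singleton]; rfl
  | (m + 3) =>
      set z₀ : PtW f := ⟨cov f x.t false⟩ with hz₀def
      set z₁ : PtW f := ⟨cov f x.t true⟩ with hz₁def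
      have hE₀ : Ed f x.t z₀.t := Ed_cov f x.t false
      have hE₁ : Ed f x.t z₁.t := Ed_cov f x.t true
      have hl₀ := Ed_lvl hE₀
      have hl₁ := Ed_lvl hE₁
      have : {z : PtW f | x ⋖ z ∧ z ≤ y} = {z₀, z₁} := by
        ext z
        simp only [Set.mem_setOf_eq, Set.mem_insert_iff, Set.mem_singleton_iff]
        constructor
        · rintro ⟨h1, _⟩
          obtain ⟨c, hc⟩ := Ed_iff.1 (covBy_iff.1 h1)
          cases c
          · exact Or.inl (PtW.ext hc)
          · exact Or.inr (PtW.ext hc)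
        · rintro (rfl | rfl)
          · exact ⟨covBy_iff.2 hE₀, le_of_gap (by omega)⟩
          · exact ⟨covBy_iff.2 hE₁, le_of_gap (by omega)⟩
      rw [this]
      exact (Set.ncard_pair (fun h => cov_ne f x.t (congrArg PtW.t h))).trans (by simp [A112])

/-- A canonical element of each level. -/
def decP (f : ℕ → Bool) : ℕ × Bool × Bool → PtW f
  | (0, _, _) => ⟨.bot⟩
  | (1, _, b) => ⟨.atom b⟩
  | (k + 2, a, b) => ⟨.node k a b⟩

def elt (f : ℕ → Bool) : ℕ → PtW f
  | 0 => ⟨Pt.bot⟩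
  | 1 => ⟨Pt.atom false⟩
  | (k + 2) => ⟨Pt.node k false false⟩

lemma elt_lvl (n : ℕ) : (elt f n).t.lvl = n := by
  match n with
  | 0 => rfl
  | 1 => rfl
  | (k + 2) => rfl

lemma isBin (f : ℕ → Bool) : IsBinomialPoset (PtW f) (botW f) A112 := by
  constructor
  · exact bot_le'
  · -- directed
    intro x y
    refine ⟨⟨Pt.node (max x.t.lvl y.t.lvl) false false⟩, le_of_gap ?_, le_of_gap ?_⟩ <;>
      simp [Pt.lvl] <;> omega
  · -- locFin
    intro x y
    set N := y.t.lvl with hN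
    have hfin : (((Set.Iic N) ×ˢ (Set.univ : Set (Bool × Bool))).image (decP f)).Finite :=
      ((Set.finite_Iic N).prod Set.finite_univ).image _
    refine hfin.subset ?_
    intro p hp
    have hlvl : p.t.lvl ≤ N := lvl_le_of_le hp.2
    obtain ⟨pt⟩ := p
    cases pt with
    | bot => exact ⟨(0, false, false), ⟨by simpa [Pt.lvl] using hlvl, trivial⟩, rfl⟩
    | atom t => exact ⟨(1, false, t), ⟨by simpa [Pt.lvl] using hlvl, trivial⟩, rfl⟩
    | node k a b =>
        exact ⟨(k + 2, a, b), ⟨by simpa [Pt.lvl] using hlvl, trivial⟩, rfl⟩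
  · -- chain_nonempty
    intro x y hxy
    have hle := lvl_le_of_le hxy
    obtain ⟨n, hn⟩ : ∃ n, y.t.lvl = x.t.lvl + n := ⟨y.t.lvl - x.t.lvl, by omega⟩
    obtain ⟨hfin, hcard⟩ := chains_spec n x y hxy hn
    exact Set.nonempty_of_ncard_ne_zero (by rw [hcard]; have := Nc_pos n; omega)
  · -- graded
    intro x y l hl l' hl'
    have h1 := chain_len l x y hl.1 hl.2.1 hl.2.2
    have h2 := chain_len l' x y hl'.1 hl'.2.1 hl'.2.2
    omega
  · -- allLengths
    intro n
    refine ⟨elt f n, ?_⟩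
    have hle : botW f ≤ elt f n := bot_le' _
    have hlvl : (elt f n).t.lvl = (botW f).t.lvl + n := by rw [elt_lvl]; simp [botW, Pt.lvl]
    obtain ⟨hfin, hcard⟩ := chains_spec n (botW f) (elt f n) hle hlvl
    obtain ⟨l, hl⟩ := Set.nonempty_of_ncard_ne_zero (s := CovChains (botW f) (elt f n))
      (by rw [hcard]; have := Nc_pos n; omega)
    refine ⟨l, hl, ?_⟩
    have := chain_len l _ _ hl.1 hl.2.1 hl.2.2
    rw [elt_lvl] at this
    simpa [botW, Pt.lvl] using this
  · -- count
    intro x y x' y' n h h'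
    obtain ⟨hxy, hl⟩ := interval_data h
    obtain ⟨hxy', hl'⟩ := interval_data h'
    rw [(chains_spec n x y hxy hl).2, (chains_spec n x' y' hxy' hl').2]
  · -- atoms
    intro x y n hn h
    obtain ⟨hxy, hl⟩ := interval_data h
    exact atoms_set hn hxy hl

end PtW

namespace PtW
variable {f : ℕ → Bool}

lemma strongConf (f : ℕ → Bool) : StronglyConfluent (PtW f) := by
  refine ⟨fun n => ⟨Pt.node n false false⟩, ?_, ?_⟩
  · intro n m hnm
    rcases Nat.lt_or_ge (n + 1) m with h | h
    · exact lt_of_le_lvl (le_of_gap (by simp [Pt.lvl]; omega)) (by simp [Pt.lvl]; omega)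
    · have hm : m = n + 1 := by omega
      subst hm
      refine lt_of_le_lvl (le_of_Ed ⟨rfl, ?_⟩) (by simp [Pt.lvl])
      simp
  · intro p
    exact ⟨p.t.lvl, le_of_gap (by simp [Pt.lvl])⟩

lemma infinite (f : ℕ → Bool) : Infinite (PtW f) :=
  Infinite.of_injective (fun n => (⟨Pt.node n false false⟩ : PtW f))
    (fun a b h => by
      have := congrArg (fun p : PtW f => p.t.lvl) h
      simp only [Pt.lvl] at this
      omega)

/-- The canonical lower cover. -/
def par : Pt → Pt
  | .bot => .bot
  | .atom _ => .bot
  | .node 0 x _ => .atom x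
  | .node (n + 1) x _ => .node n false x

lemma Ed_par {p : Pt} (hp : p ≠ .bot) : Ed f (par p) p := by
  cases p with
  | bot => exact absurd rfl hp
  | atom t => trivial
  | node n x y =>
      cases n with
      | zero => exact ⟨rfl, rfl⟩
      | succ k => exact ⟨rfl, by simp⟩

lemma par_lvl {p : Pt} (hp : p ≠ .bot) : p.lvl = (par p).lvl + 1 := by
  cases p with
  | bot => exact absurd rfl hp
  | atom t => rfl
  | node n x y => cases n <;> rfl

end PtW

section Iso
variable {f g : ℕ → Bool}

open PtW

lemma iso_bot (e : PtW f ≃o PtW g) : e (botW f) = botW g := by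
  have h1 : botW g ≤ e (botW f) := bot_le' _
  have h2 : e (botW f) ≤ botW g := by
    have : botW f ≤ e.symm (botW g) := bot_le' _
    have := e.monotone this
    simpa using this
  exact le_antisymm h2 h1

lemma iso_covBy (e : PtW f ≃o PtW g) {p q : PtW f} (h : p ⋖ q) : e p ⋖ e q := by
  constructor
  · exact e.strictMono h.lt
  · intro c h1 h2
    exact h.2 (show p < e.symm c by
        have := e.symm.strictMono h1; simpa using this)
      (show e.symm c < q by
        have := e.symm.strictMono h2; simpa using this)

lemma iso_lvl (e : PtW f ≃o PtW g) : ∀ (n : ℕ) (p : PtW f), p.t.lvl = n → (e p).t.lvl = n := by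
  intro n
  induction n with
  | zero =>
      intro p hp
      have hb : p = botW f := by
        obtain ⟨pt⟩ := p
        cases pt with
        | bot => rfl
        | atom t => simp [Pt.lvl] at hp
        | node k a b => simp [Pt.lvl] at hp
      subst hb
      rw [iso_bot e]
      rfl
  | succ n ihn =>
      intro p hp
      have hpb : p.t ≠ .bot := by
        intro h
        rw [h] at hp
        simp [Pt.lvl] at hp
      have hpar : (⟨par p.t⟩ : PtW f) ⋖ p := covBy_iff.2 (Ed_par hpb)
      have hlvl : (par p.t).lvl = n := by
        have := par_lvl hpb; omega
      have h1 := iso_covBy e hpar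
      have h2 := ihn ⟨par p.t⟩ hlvl
      have := Ed_lvl (covBy_iff.1 h1)
      omega

/-- The order-theoretic invariant detecting the type of the graph between
levels `m` and `m + 1`. -/
def Phi (h : ℕ → Bool) (m : ℕ) : Prop :=
  ∃ z₁ z₂ : PtW h, z₁.t.lvl = m + 1 ∧ z₂.t.lvl = m + 1 ∧ z₁ ≠ z₂ ∧
    ∀ w, w ⋖ z₁ ↔ w ⋖ z₂

lemma iso_Phi (e : PtW f ≃o PtW g) (m : ℕ) (h : Phi f m) : Phi g m := by
  obtain ⟨z₁, z₂, h1, h2, hne, hcov⟩ := h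
  refine ⟨e z₁, e z₂, iso_lvl e _ z₁ h1, iso_lvl e _ z₂ h2,
    fun hh => hne (e.injective hh), ?_⟩
  intro w
  have k1 : e.symm w ⋖ z₁ ↔ w ⋖ e z₁ := by
    constructor
    · intro h'; have := iso_covBy e h'; simpa using this
    · intro h'; have := iso_covBy e.symm h'; simpa using this
  have k2 : e.symm w ⋖ z₂ ↔ w ⋖ e z₂ := by
    constructor
    · intro h'; have := iso_covBy e h'; simpa using this
    · intro h'; have := iso_covBy e.symm h'; simpa using this
  rw [← k1, ← k2]
  exact hcov _

lemma Phi_iff (h : ℕ → Bool) (m : ℕ) (hm : 2 ≤ m) : Phi h m ↔ typ h m = false := by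
  constructor
  · intro hp
    by_contra htyp
    rw [Bool.not_eq_false] at htyp
    obtain ⟨z₁, z₂, h1, h2, hne, hcov⟩ := hp
    -- both z's are nodes at level m+1
    obtain ⟨m', x₁, y₁, hz₁⟩ : ∃ m' x y, z₁.t = Pt.node m' x y := by
      cases hz : z₁.t with
      | bot => rw [hz] at h1; simp [Pt.lvl] at h1
      | atom t => rw [hz] at h1; simp [Pt.lvl] at h1; omega
      | node k a b => exact ⟨k, a, b, rfl⟩
    obtain ⟨m'', x₂, y₂, hz₂⟩ : ∃ m' x y, z₂.t = Pt.node m' x y := by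
      cases hz : z₂.t with
      | bot => rw [hz] at h2; simp [Pt.lvl] at h2
      | atom t => rw [hz] at h2; simp [Pt.lvl] at h2; omega
      | node k a b => exact ⟨k, a, b, rfl⟩
    have hm' : m' = m - 1 := by rw [hz₁] at h1; simp [Pt.lvl] at h1; omega
    have hm'' : m'' = m - 1 := by rw [hz₂] at h2; simp [Pt.lvl] at h2; omega
    subst hm'; subst hm''
    have hmm : m - 1 = (m - 2) + 1 := by omega
    have hmt : (m - 2) + 2 = m := by omega
    -- first witness : a = false
    have w1 : (⟨Pt.node (m - 2) false x₁⟩ : PtW h) ⋖ z₁ := by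
      refine covBy_iff.2 ?_
      rw [hz₁]
      exact ⟨by omega, by rw [hmt]; cases x₁ <;> cases typ h m <;> rfl⟩
    have w1' := (hcov _).1 w1
    have hx : x₁ = x₂ := by
      have := covBy_iff.1 w1'
      rw [hz₂] at this
      obtain ⟨_, hb⟩ := this
      revert hb
      rw [hmt]
      cases x₁ <;> cases x₂ <;> cases y₂ <;> cases typ h m <;> simp
    -- second witness : a = true
    have w2 : (⟨Pt.node (m - 2) true (Bool.xor x₁ y₁)⟩ : PtW h) ⋖ z₁ := by
      refine covBy_iff.2 ?_
      rw [hz₁]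
      refine ⟨by omega, ?_⟩
      rw [hmt, htyp]
      cases x₁ <;> cases y₁ <;> rfl
    have w2' := (hcov _).1 w2
    have hy : y₁ = y₂ := by
      have := covBy_iff.1 w2'
      rw [hz₂] at this
      obtain ⟨_, hb⟩ := this
      revert hb
      rw [hmt, htyp]
      subst hx
      cases x₁ <;> cases y₁ <;> cases y₂ <;> simp
    exact hne (PtW.ext (by rw [hz₁, hz₂, hx, hy]))
  · intro htyp
    have hmm : m - 1 = (m - 2) + 1 := by omega
    have hmt : (m - 2) + 2 = m := by omega
    refine ⟨⟨Pt.node (m - 1) false false⟩, ⟨Pt.node (m - 1) false true⟩,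
      by simp [Pt.lvl]; omega, by simp [Pt.lvl]; omega, by simp, ?_⟩
    intro w
    rw [covBy_iff, covBy_iff]
    obtain ⟨wt⟩ := w
    cases wt with
    | bot => exact Iff.rfl
    | atom t => exact Iff.rfl
    | node k a b =>
        simp only [Ed]
        constructor <;> rintro ⟨h1, h2⟩ <;> refine ⟨h1, ?_⟩ <;>
          · have hk : k + 2 = m := by omega
            rw [hk, htyp] at h2 ⊢
            revert h2
            cases a <;> cases b <;> simp

end Iso

lemma typ_eval (h : ℕ → Bool) (k : ℕ) : typ h (2 * k + 3) = h k := by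
  unfold typ
  have h1 : 3 ≤ 2 * k + 3 := by omega
  have h2 : (2 * k + 3) % 2 = 1 := by omega
  have h3 : (2 * k + 3 - 3) / 2 = k := by omega
  simp [h1, h2, h3]


/-- there are uncountably many (`2 ^ ℵ₀`) isomorphism classes of strongly
confluent infinite downward bounded binomial posets with atomic sequence
`(1,1,2,2,2,...)` : there is an injection from `ℕ → Bool` into the isomorphism classes. -/
theorem A112_uncountably_many_iso_classes :
    ∃ F : (ℕ → Bool) → BinPoset,
      (∀ f : ℕ → Bool, IsBinomialPoset (F f).carrier (F f).bot A112 ∧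
        StronglyConfluent (F f).carrier ∧ Infinite (F f).carrier) ∧
      ∀ f g : ℕ → Bool, Nonempty ((F f).carrier ≃o (F g).carrier) → f = g := by
  refine ⟨fun f => { carrier := PtW f, bot := PtW.botW f }, ?_, ?_⟩
  · intro f
    exact ⟨PtW.isBin f, PtW.strongConf f, PtW.infinite f⟩
  · rintro f g ⟨e⟩
    funext k
    have key : ∀ m, 2 ≤ m → (typ f m = false ↔ typ g m = false) := by
      intro m hm
      rw [← Phi_iff f m hm, ← Phi_iff g m hm]
      exact ⟨iso_Phi e m, iso_Phi e.symm m⟩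
    have hm : 2 ≤ 2 * k + 3 := by omega
    have : typ f (2 * k + 3) = typ g (2 * k + 3) := by
      rcases hf : typ f (2 * k + 3) with _ | _
      · rw [(key _ hm).1 hf]
      · rcases hg : typ g (2 * k + 3) with _ | _
        · exact absurd ((key _ hm).2 hg) (by rw [hf]; simp)
        · rfl
    rw [← typ_eval f k, ← typ_eval g k, this]
end
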